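/- arXiv:2604.01353 — 6 statements merged into one kernel-verified Lean document; each statement's English description precedes it below -/
import Mathlib

section
/- Let R be a (not necessarily commutative) unital ℂ-algebra and let a_1,…,a_m, b_1,…,b_m ∈ R be 2m elements such that any two distinct members of the combined family anticommute (x*y = −y*x) and each member squares to 0. Let A, B ∈ Matrix (Fin m) (Fin m) ℂ and let I ⊆ Fin m be a finset with increasing enumeration i_1 < … < i_p. Then ∏_{s=1}^{p} ( Σ_{k} A_{i_s,k} • a_k + Σ_{α} B_{i_s,α} • b_α ) = Σ det(A_{I×L} | B_{I×Λ}) • a_L * b_Λ, where the sum runs over all pairs of finsets L, Λ ⊆ Fin m with |L| + |Λ| = |I|. -/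
open Matrix Finset

noncomputable section

/-- Ordered product of a family over a finset, factors in increasing index order. -/
def oprod {R : Type*} [Monoid R] {m : ℕ} (x : Fin m → R) (I : Finset (Fin m)) : R :=
  ((I.sort (· ≤ ·)).map x).prod

/-- `det (A_{I×L} | B_{I×Λ})`: determinant of the square matrix whose rows are indexed
by `I` in increasing order, whose first `|L|` columns are entries of `A` with columns
from `L` in increasing order, and whose last `|Λ|` columns are entries of `B` with
columns from `Λ` in increasing order (defined to be `0` if `|L| + |Λ| ≠ |I|`). -/
def concatDet {m : ℕ} (A B : Matrix (Fin m) (Fin m) ℂ) (I L Λ : Finset (Fin m)) : ℂ :=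
  if h : L.card + Λ.card = I.card then
    Matrix.det (Matrix.of fun r c : Fin I.card =>
      Sum.elim
        (fun l => A (I.orderIsoOfFin rfl r) (L.orderIsoOfFin rfl l))
        (fun w => B (I.orderIsoOfFin rfl r) (Λ.orderIsoOfFin rfl w))
        (finSumFinEquiv.symm (Fin.cast h.symm c)))
  else 0

set_option linter.unusedSectionVars false

section Aux
variable {ι : Type*} [LinearOrder ι] {R : Type*} [Ring R] [Algebra ℂ R]
variable (x : ι → R)

def oprodG (S : Finset ι) : R := ((S.sort (· ≤ ·)).map x).prod

lemma mul_listProd_of_mem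
    (hx : ∀ i j : ι, i ≠ j → x i * x j = -(x j * x i)) (hx0 : ∀ i, x i * x i = 0)
    {j : ι} : ∀ (l : List ι), j ∈ l → x j * (l.map x).prod = 0 := by
  intro l
  induction l with
  | nil => simp
  | cons h t ih =>
    intro hm
    rcases eq_or_ne j h with rfl | hne
    · simp [← mul_assoc, hx0 j]
    · have hmt : j ∈ t := by
        rcases List.mem_cons.1 hm with h' | h'
        · exact absurd h' hne
        · exact h'
      have : x j * (x h * (t.map x).prod) = -(x h * (x j * (t.map x).prod)) := by
        rw [← mul_assoc, hx j h hne, neg_mul, mul_assoc]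
      simp only [List.map_cons, List.prod_cons, this, ih hmt, mul_zero, neg_zero]

lemma mul_listProd_of_not_mem
    (hx : ∀ i j : ι, i ≠ j → x i * x j = -(x j * x i))
    {j : ι} : ∀ (l : List ι), l.Pairwise (· < ·) → j ∉ l →
      x j * (l.map x).prod
        = ((-1 : ℂ) ^ (l.countP (fun i => decide (i < j)))) •
            ((l.orderedInsert (· ≤ ·) j).map x).prod := by
  intro l
  induction l with
  | nil => simp [List.orderedInsert]
  | cons h t ih =>
    intro hs hm
    have hne : j ≠ h := fun he => hm (he ▸ List.mem_cons_self (a := h) (l := t))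
    have hst : t.Pairwise (· < ·) := hs.of_cons
    have hht : ∀ i ∈ t, h < i := fun i hi => (List.pairwise_cons.1 hs).1 i hi
    have hmt : j ∉ t := fun hjt => hm (List.mem_cons_of_mem h hjt)
    by_cases hjh : j ≤ h
    · have hjh' : j < h := lt_of_le_of_ne hjh hne
      have hcount : (h :: t).countP (fun i => decide (i < j)) = 0 := by
        rw [List.countP_eq_zero]
        intro i hi
        rcases List.mem_cons.1 hi with rfl | hi'
        · simp [not_lt.2 hjh'.le]
        · simp [not_lt.2 (hjh'.le.trans (hht i hi').le)]
      rw [List.orderedInsert, if_pos hjh, hcount]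
      simp [List.prod_cons, mul_assoc]
    · have hhj : h < j := not_le.1 hjh
      have hcount : (h :: t).countP (fun i => decide (i < j))
          = t.countP (fun i => decide (i < j)) + 1 := by
        rw [List.countP_cons]
        simp [hhj]
      rw [List.orderedInsert, if_neg hjh, hcount]
      have step : x j * (x h * (t.map x).prod) = -(x h * (x j * (t.map x).prod)) := by
        rw [← mul_assoc, hx j h hne, neg_mul, mul_assoc]
      simp only [List.map_cons, List.prod_cons, step, ih hst hmt]
      rw [mul_smul_comm, ← neg_smul, pow_succ]
      ring_nf

lemma sort_insert_eq_orderedInsert {j : ι} {S : Finset ι} (hj : j ∉ S) :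
    (insert j S).sort (· ≤ ·) = (S.sort (· ≤ ·)).orderedInsert (· ≤ ·) j := by
  have hperm : ((insert j S).sort (· ≤ ·)).Perm ((S.sort (· ≤ ·)).orderedInsert (· ≤ ·) j) :=
    ((Finset.sort_perm_toList _ _).trans ((Finset.toList_insert hj).trans
      (List.Perm.cons j (Finset.sort_perm_toList _ _).symm))).trans
      (List.perm_orderedInsert _ _ _).symm
  exact List.Perm.eq_of_pairwise' (Finset.pairwise_sort _ _)
    ((Finset.pairwise_sort S (· ≤ ·)).orderedInsert j _) hperm

lemma countP_sort_eq {S : Finset ι} (p : ι → Prop) [DecidablePred p] :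
    (S.sort (· ≤ ·)).countP (fun i => decide (p i)) = (S.filter p).card := by
  classical
  rw [(Finset.sort_perm_toList S (· ≤ ·)).countP_eq, Finset.card_def, Finset.filter_val,
    ← Finset.coe_toList S, Multiset.filter_coe, Multiset.coe_card,
    List.countP_eq_length_filter]

lemma mul_oprodG_of_mem
    (hx : ∀ i j : ι, i ≠ j → x i * x j = -(x j * x i)) (hx0 : ∀ i, x i * x i = 0)
    {j : ι} {S : Finset ι} (hj : j ∈ S) : x j * oprodG x S = 0 :=
  mul_listProd_of_mem x hx hx0 _ ((Finset.mem_sort _).2 hj)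

lemma mul_oprodG_of_not_mem
    (hx : ∀ i j : ι, i ≠ j → x i * x j = -(x j * x i))
    {j : ι} {S : Finset ι} (hj : j ∉ S) :
    x j * oprodG x S
      = ((-1 : ℂ) ^ (S.filter (· < j)).card) • oprodG x (insert j S) := by
  classical
  have hnm : j ∉ S.sort (· ≤ ·) := by rw [Finset.mem_sort]; exact hj
  have h := mul_listProd_of_not_mem x hx (S.sort (· ≤ ·)) (List.sortedLT_iff_pairwise.1 (Finset.sortedLT_sort S)) hnm
  rw [oprodG, h, countP_sort_eq, oprodG, sort_insert_eq_orderedInsert hj]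

end Aux
section Stage3
variable {ι : Type*} [LinearOrder ι]

lemma erase_orderEmbOfFin_eq {T : Finset ι} {p : ℕ} (hT : T.card = p + 1) (a : Fin (p + 1))
    (h' : (T.erase (T.orderEmbOfFin hT a)).card = p) :
    ⇑((T.erase (T.orderEmbOfFin hT a)).orderEmbOfFin h')
      = fun t => T.orderEmbOfFin hT (a.succAbove t) := by
  symm
  refine Finset.orderEmbOfFin_unique h' (fun t => ?_) ?_
  · exact Finset.mem_erase.2 ⟨(T.orderEmbOfFin hT).injective.ne (Fin.succAbove_ne a t),
      Finset.orderEmbOfFin_mem T hT _⟩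
  · exact (T.orderEmbOfFin hT).strictMono.comp (Fin.strictMono_succAbove a)

lemma card_filter_lt_orderEmbOfFin {T : Finset ι} {p : ℕ} (hT : T.card = p + 1)
    (a : Fin (p + 1)) :
    (T.filter (· < T.orderEmbOfFin hT a)).card = (a : ℕ) := by
  classical
  have himg : T.filter (· < T.orderEmbOfFin hT a)
      = (Finset.Iio a).image (T.orderEmbOfFin hT) := by
    ext y
    simp only [Finset.mem_filter, Finset.mem_image, Finset.mem_Iio]
    constructor
    · rintro ⟨hyT, hy⟩
      obtain ⟨i, rfl⟩ : ∃ i, T.orderEmbOfFin hT i = y := by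
        have : y ∈ Set.range ⇑(T.orderEmbOfFin hT) := by
          rw [Finset.range_orderEmbOfFin]; exact_mod_cast hyT
        exact this
      exact ⟨i, (T.orderEmbOfFin hT).lt_iff_lt.1 hy, rfl⟩
    · rintro ⟨i, hi, rfl⟩
      exact ⟨Finset.orderEmbOfFin_mem T hT i, (T.orderEmbOfFin hT).lt_iff_lt.2 hi⟩
  rw [himg, Finset.card_image_of_injective _ (T.orderEmbOfFin hT).injective, Fin.card_Iio]

lemma filter_lt_erase {T : Finset ι} (y : ι) :
    (T.erase y).filter (· < y) = T.filter (· < y) := by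
  classical
  ext z
  simp only [Finset.mem_filter, Finset.mem_erase]
  constructor
  · rintro ⟨⟨_, hz⟩, hlt⟩; exact ⟨hz, hlt⟩
  · rintro ⟨hz, hlt⟩; exact ⟨⟨ne_of_lt hlt, hz⟩, hlt⟩

lemma det_laplace_row_zero {T : Finset ι} {p : ℕ} (hT : T.card = p + 1)
    (v : Fin (p + 1) → ι → ℂ) :
    Matrix.det (Matrix.of fun s t : Fin (p + 1) => v s (T.orderEmbOfFin hT t))
      = ∑ j ∈ T, ((-1 : ℂ) ^ ((T.erase j).filter (· < j)).card * v 0 j *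
          (if h : (T.erase j).card = p then
            Matrix.det (Matrix.of fun s t : Fin p => v s.succ ((T.erase j).orderEmbOfFin h t))
          else 0)) := by
  classical
  rw [Matrix.det_succ_row_zero]
  refine Finset.sum_nbij' (fun a => T.orderEmbOfFin hT a)
    (fun j => if hj : j ∈ T then (T.orderIsoOfFin hT).symm ⟨j, hj⟩ else 0)
    (fun a _ => Finset.orderEmbOfFin_mem T hT a) (fun j hj => Finset.mem_univ _)
    (fun a _ => ?_) (fun j hj => ?_) (fun a _ => ?_)
  · rw [dif_pos (Finset.orderEmbOfFin_mem T hT a)]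
    have : (⟨T.orderEmbOfFin hT a, Finset.orderEmbOfFin_mem T hT a⟩ : {y // y ∈ T})
        = T.orderIsoOfFin hT a := rfl
    rw [this, OrderIso.symm_apply_apply]
  · rw [dif_pos hj]
    exact congrArg Subtype.val ((T.orderIsoOfFin hT).apply_symm_apply ⟨j, hj⟩)
  · set y := T.orderEmbOfFin hT a with hy
    have hyT : y ∈ T := Finset.orderEmbOfFin_mem T hT a
    have h' : (T.erase y).card = p := by
      rw [Finset.card_erase_of_mem hyT, hT]
      omega
    rw [dif_pos h', filter_lt_erase, card_filter_lt_orderEmbOfFin hT a]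
    congr 1
    have := erase_orderEmbOfFin_eq hT a h'
    rw [this]
    rfl

end Stage3
section Stage4
variable {ι : Type*} [LinearOrder ι] [Fintype ι] {R : Type*} [Ring R] [Algebra ℂ R]

theorem keyExpansion (x : ι → R)
    (hx : ∀ i j : ι, i ≠ j → x i * x j = -(x j * x i)) (hx0 : ∀ i, x i * x i = 0) :
    ∀ (p : ℕ) (v : Fin p → ι → ℂ),
    (List.ofFn fun s => ∑ j, v s j • x j).prod
      = ∑ S : Finset ι,
          (if h : S.card = p then
            Matrix.det (Matrix.of fun s t : Fin p => v s (S.orderEmbOfFin h t)) else 0)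
            • oprodG x S := by
  classical
  intro p
  induction p with
  | zero =>
    intro v
    rw [List.ofFn_zero, List.prod_nil]
    rw [Finset.sum_eq_single (∅ : Finset ι)]
    · rw [dif_pos (Finset.card_empty)]
      simp [oprodG, Matrix.det_fin_zero]
    · intro S _ hS
      rw [dif_neg (by simpa [Finset.card_eq_zero] using hS), zero_smul]
    · intro h; exact absurd (Finset.mem_univ _) h
  | succ p IH =>
    intro v
    rw [List.ofFn_succ, List.prod_cons, IH (fun s => v s.succ)]
    set c : Finset ι → ℂ := fun S =>
      if h : S.card = p then
        Matrix.det (Matrix.of fun s t : Fin p => v s.succ (S.orderEmbOfFin h t)) else 0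
      with hc
    set C : Finset ι → ℂ := fun T =>
      if h : T.card = p + 1 then
        Matrix.det (Matrix.of fun s t : Fin (p + 1) => v s (T.orderEmbOfFin h t)) else 0
      with hC
    have hLHS : (∑ j, v 0 j • x j) * (∑ S : Finset ι, c S • oprodG x S)
        = ∑ q ∈ (Finset.univ ×ˢ Finset.univ : Finset (Finset ι × ι)),
            (v 0 q.2 * c q.1) • (x q.2 * oprodG x q.1) := by
      rw [Finset.sum_product, Finset.mul_sum]
      refine Finset.sum_congr rfl fun S _ => ?_
      rw [Finset.sum_mul]
      refine Finset.sum_congr rfl fun j _ => ?_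
      rw [smul_mul_smul_comm]
    have hRHS : (∑ T : Finset ι, C T • oprodG x T)
        = ∑ q ∈ (Finset.univ ×ˢ Finset.univ : Finset (Finset ι × ι)),
            (if q.2 ∈ q.1 ∧ q.1.card = p + 1 then
              ((-1 : ℂ) ^ (((q.1.erase q.2).filter (· < q.2)).card) * v 0 q.2
                * c (q.1.erase q.2)) • oprodG x q.1 else 0) := by
      rw [Finset.sum_product]
      refine Finset.sum_congr rfl fun T _ => ?_
      by_cases hT : T.card = p + 1
      · simp only [hT, and_true]
        rw [Finset.sum_ite_mem, Finset.univ_inter, ← Finset.sum_smul]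
        congr 1
        rw [show C T = Matrix.det (Matrix.of fun s t : Fin (p + 1) =>
          v s (T.orderEmbOfFin hT t)) from dif_pos hT]
        rw [det_laplace_row_zero hT v]
      · simp only [hT, and_false, if_false, Finset.sum_const_zero]
        rw [show C T = 0 from dif_neg hT, zero_smul]
    rw [hLHS, hRHS]
    rw [← Finset.sum_filter_of_ne
      (p := fun q : Finset ι × ι => q.1.card = p ∧ q.2 ∉ q.1) (by
        intro q _ hne
        by_contra hq
        apply hne
        by_cases h1 : q.1.card = p
        · have h2 : q.2 ∈ q.1 := by
            by_contra h2
            exact hq ⟨h1, h2⟩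
          rw [mul_oprodG_of_mem x hx hx0 h2, smul_zero]
        · rw [hc]
          dsimp only
          rw [dif_neg h1, mul_zero, zero_smul])]
    rw [← Finset.sum_filter]
    refine Finset.sum_nbij' (fun q => (insert q.2 q.1, q.2)) (fun q => (q.1.erase q.2, q.2))
      ?_ ?_ ?_ ?_ ?_
    · intro q hq
      obtain ⟨-, h1, h2⟩ := Finset.mem_filter.1 hq
      refine Finset.mem_filter.2 ⟨Finset.mem_univ _, Finset.mem_insert_self _ _, ?_⟩
      rw [Finset.card_insert_of_notMem h2, h1]
    · intro q hq
      obtain ⟨-, h1, h2⟩ := Finset.mem_filter.1 hq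
      refine Finset.mem_filter.2 ⟨Finset.mem_univ _, ?_, Finset.notMem_erase _ _⟩
      rw [Finset.card_erase_of_mem h1, h2]
      omega
    · intro q hq
      obtain ⟨-, h1, h2⟩ := Finset.mem_filter.1 hq
      simp [Finset.erase_insert h2]
    · intro q hq
      obtain ⟨-, h1, h2⟩ := Finset.mem_filter.1 hq
      simp [Finset.insert_erase h1]
    · intro q hq
      obtain ⟨-, h1, h2⟩ := Finset.mem_filter.1 hq
      dsimp only
      rw [Finset.erase_insert h2, mul_oprodG_of_not_mem x hx h2, smul_smul]
      ring_nf
end Stage4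
section Special

lemma oprod_eq_ofFn {α : Type*} [LinearOrder α] {M : Type*} [Monoid M] (f : α → M)
    (S : Finset α) :
    ((S.sort (· ≤ ·)).map f).prod
      = (List.ofFn fun i : Fin S.card => f (S.orderEmbOfFin rfl i)).prod := by
  have hs : S.sort (· ≤ ·) = List.ofFn (fun i : Fin S.card => S.orderEmbOfFin rfl i) := by
    apply List.ext_getElem
    · simp [Finset.length_sort]
    · intro i h1 h2
      rw [List.getElem_ofFn]
      rw [Finset.orderEmbOfFin_apply]
      rfl
  rw [hs, List.map_ofFn]
  rfl

variable {m : ℕ}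

def embL : Fin m ↪ Lex (Fin m ⊕ Fin m) :=
  ⟨fun k => toLex (Sum.inl k), fun k k' h => by
    exact Sum.inl.inj (toLex.injective h)⟩

def embR : Fin m ↪ Lex (Fin m ⊕ Fin m) :=
  ⟨fun k => toLex (Sum.inr k), fun k k' h => by
    exact Sum.inr.inj (toLex.injective h)⟩

lemma disjLR (L Λ : Finset (Fin m)) : Disjoint (L.map embL) (Λ.map embR) := by
  rw [Finset.disjoint_left]
  rintro i hi hj
  obtain ⟨k, -, rfl⟩ := Finset.mem_map.1 hi
  obtain ⟨k', -, he⟩ := Finset.mem_map.1 hj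
  exact Sum.inr_ne_inl (toLex.injective (show toLex (Sum.inr k') = toLex (Sum.inl k) from he))

lemma card_unionLR (L Λ : Finset (Fin m)) :
    (L.map embL ∪ Λ.map embR).card = L.card + Λ.card := by
  rw [Finset.card_union_of_disjoint (disjLR L Λ), Finset.card_map, Finset.card_map]

lemma sort_unionLR (L Λ : Finset (Fin m)) :
    (L.map embL ∪ Λ.map embR).sort (· ≤ ·)
      = ((L.sort (· ≤ ·)).map (fun k => toLex (Sum.inl k)))
          ++ ((Λ.sort (· ≤ ·)).map (fun k => toLex (Sum.inr k))) := by
  refine List.Perm.eq_of_pairwise' (r := (· ≤ ·)) (Finset.pairwise_sort _ _) ?_ ?_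
  swap
  · rw [← Multiset.coe_eq_coe]
    have h1 : ((L.map embL ∪ Λ.map embR).sort (· ≤ ·) : Multiset (Lex (Fin m ⊕ Fin m)))
        = (L.map embL ∪ Λ.map embR).val := Finset.sort_eq _ _
    have hval : ((L.map embL).disjUnion (Λ.map embR) (disjLR L Λ)).val
        = (L.map embL).val + (Λ.map embR).val := rfl
    rw [h1, ← Finset.disjUnion_eq_union _ _ (disjLR L Λ), hval,
      Finset.map_val, Finset.map_val,
      ← Finset.sort_eq L (· ≤ ·), ← Finset.sort_eq Λ (· ≤ ·)]
    simp only [Multiset.map_coe, ← Multiset.coe_add]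
    rfl
  · rw [List.pairwise_append]
    refine ⟨?_, ?_, ?_⟩
    · rw [List.pairwise_map]
      exact (Finset.pairwise_sort L (· ≤ ·)).imp (fun h => Sum.Lex.inl_le_inl_iff.2 h)
    · rw [List.pairwise_map]
      exact (Finset.pairwise_sort Λ (· ≤ ·)).imp (fun h => Sum.Lex.inr_le_inr_iff.2 h)
    · intro u hu w hw
      obtain ⟨k, -, rfl⟩ := List.mem_map.1 hu
      obtain ⟨k', -, rfl⟩ := List.mem_map.1 hw
      exact (Sum.Lex.inl_lt_inr k k').le

lemma orderEmb_unionLR (L Λ : Finset (Fin m)) :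
    ⇑((L.map embL ∪ Λ.map embR).orderEmbOfFin (card_unionLR L Λ))
      = fun c => toLex (Sum.map (fun l => L.orderEmbOfFin rfl l)
          (fun w => Λ.orderEmbOfFin rfl w) (finSumFinEquiv.symm c)) := by
  symm
  refine Finset.orderEmbOfFin_unique _ (fun c => ?_) ?_
  · rcases h : finSumFinEquiv.symm c with l | w
    · simp only [Sum.map_inl]
      exact Finset.mem_union_left _
        (Finset.mem_map_of_mem embL (Finset.orderEmbOfFin_mem L rfl l))
    · simp only [Sum.map_inr]
      exact Finset.mem_union_right _
        (Finset.mem_map_of_mem embR (Finset.orderEmbOfFin_mem Λ rfl w))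
  · intro c1 c2 hlt
    rcases h1 : finSumFinEquiv.symm c1 with l1 | w1 <;>
      rcases h2 : finSumFinEquiv.symm c2 with l2 | w2 <;>
      rw [(Equiv.symm_apply_eq _).1 h1, (Equiv.symm_apply_eq _).1 h2] at hlt <;>
      dsimp only <;>
      rw [h1, h2] <;>
      simp only [finSumFinEquiv_apply_left, finSumFinEquiv_apply_right] at hlt <;>
      simp only [Sum.map_inl, Sum.map_inr]
    · refine Sum.Lex.inl_lt_inl_iff.2 ((L.orderEmbOfFin rfl).strictMono ?_)
      rw [Fin.lt_def] at hlt ⊢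
      simpa using hlt
    · exact Sum.Lex.inl_lt_inr _ _
    · exfalso
      rw [Fin.lt_def] at hlt
      simp only [Fin.coe_natAdd, Fin.coe_castAdd] at hlt
      omega
    · refine Sum.Lex.inr_lt_inr_iff.2 ((Λ.orderEmbOfFin rfl).strictMono ?_)
      rw [Fin.lt_def] at hlt ⊢
      simpa using hlt

lemma orderEmbOfFin_cast {α : Type*} [LinearOrder α] {T : Finset α} {k k' : ℕ}
    (h : T.card = k) (h' : T.card = k') (e : k = k') (t : Fin k) :
    T.orderEmbOfFin h t = T.orderEmbOfFin h' (Fin.cast e t) := by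
  rw [Finset.orderEmbOfFin_apply, Finset.orderEmbOfFin_apply]
  rfl

end Special

lemma lex_cases {m : ℕ} (i : Lex (Fin m ⊕ Fin m)) :
    (∃ k, i = toLex (Sum.inl k)) ∨ (∃ k, i = toLex (Sum.inr k)) := by
  rcases h : ofLex i with k | k
  · exact Or.inl ⟨k, by rw [← h, toLex_ofLex]⟩
  · exact Or.inr ⟨k, by rw [← h, toLex_ofLex]⟩

/-- Lemma 1 (fermionic multinomial expansion): if `a₁,…,a_m, b₁,…,b_m` are elements of a
unital ℂ-algebra such that any two distinct members of the combined family anticommute and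
each member squares to zero, then for any `A B : Matrix (Fin m) (Fin m) ℂ` and any finset
`I`, the ordered product of the linear combinations `(Aa + Bb)_i` over `i ∈ I` equals the
sum over finsets `L, Λ` with `|L| + |Λ| = |I|` of `det(A_{I×L} | B_{I×Λ}) • a_L b_Λ`. -/
theorem fermionic_multinomial {m : ℕ} {R : Type*} [Ring R] [Algebra ℂ R]
    (a b : Fin m → R)
    (haa : ∀ i j : Fin m, i ≠ j → a i * a j = -(a j * a i))
    (hbb : ∀ i j : Fin m, i ≠ j → b i * b j = -(b j * b i))
    (hab : ∀ i j : Fin m, a i * b j = -(b j * a i))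
    (haa0 : ∀ i : Fin m, a i * a i = 0)
    (hbb0 : ∀ i : Fin m, b i * b i = 0)
    (A B : Matrix (Fin m) (Fin m) ℂ) (I : Finset (Fin m)) :
    oprod (fun i => (∑ k, A i k • a k) + (∑ k, B i k • b k)) I
      =
    ∑ L : Finset (Fin m), ∑ Λ : Finset (Fin m),
      if L.card + Λ.card = I.card then
        concatDet A B I L Λ • (oprod a L * oprod b Λ)
      else 0 := by
  classical
  have hx : ∀ i j : Lex (Fin m ⊕ Fin m), i ≠ j →
      (Sum.elim a b (ofLex i)) * (Sum.elim a b (ofLex j))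
        = -((Sum.elim a b (ofLex j)) * (Sum.elim a b (ofLex i))) := by
    intro i j hne
    rcases lex_cases i with ⟨k, rfl⟩ | ⟨k, rfl⟩ <;>
      rcases lex_cases j with ⟨k', rfl⟩ | ⟨k', rfl⟩
    · exact haa k k' (fun h => hne (by rw [h]))
    · exact hab k k'
    · show b k * a k' = -(a k' * b k)
      rw [hab k' k, neg_neg]
    · exact hbb k k' (fun h => hne (by rw [h]))
  have hx0 : ∀ i : Lex (Fin m ⊕ Fin m),
      (Sum.elim a b (ofLex i)) * (Sum.elim a b (ofLex i)) = 0 := by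
    intro i
    rcases lex_cases i with ⟨k, rfl⟩ | ⟨k, rfl⟩
    · exact haa0 k
    · exact hbb0 k
  have hfact : ∀ s : Fin I.card,
      (∑ j : Lex (Fin m ⊕ Fin m),
        (Sum.elim (A (I.orderEmbOfFin rfl s)) (B (I.orderEmbOfFin rfl s)) (ofLex j))
          • (Sum.elim a b (ofLex j)))
      = (∑ k, A (I.orderEmbOfFin rfl s) k • a k) + ∑ k, B (I.orderEmbOfFin rfl s) k • b k := by
    intro s
    rw [← Equiv.sum_comp (toLex : (Fin m ⊕ Fin m) ≃ Lex (Fin m ⊕ Fin m)), Fintype.sum_sum_type]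
    rfl
  calc oprod (fun i => (∑ k, A i k • a k) + (∑ k, B i k • b k)) I
      = (List.ofFn fun s : Fin I.card => ∑ j : Lex (Fin m ⊕ Fin m),
          (Sum.elim (A (I.orderEmbOfFin rfl s)) (B (I.orderEmbOfFin rfl s)) (ofLex j))
            • (Sum.elim a b (ofLex j))).prod := by
        rw [oprod, oprod_eq_ofFn]
        have hfun : (fun s : Fin I.card =>
            (∑ k, A (I.orderEmbOfFin rfl s) k • a k) + ∑ k, B (I.orderEmbOfFin rfl s) k • b k)
            = fun s : Fin I.card => ∑ j : Lex (Fin m ⊕ Fin m),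
                (Sum.elim (A (I.orderEmbOfFin rfl s)) (B (I.orderEmbOfFin rfl s)) (ofLex j))
                  • (Sum.elim a b (ofLex j)) := funext fun s => (hfact s).symm
        rw [hfun]
    _ = ∑ S : Finset (Lex (Fin m ⊕ Fin m)),
          (if h : S.card = I.card then
            Matrix.det (Matrix.of fun s t : Fin I.card =>
              Sum.elim (A (I.orderEmbOfFin rfl s)) (B (I.orderEmbOfFin rfl s))
                (ofLex (S.orderEmbOfFin h t))) else 0)
            • oprodG (fun i => Sum.elim a b (ofLex i)) S :=
        keyExpansion (fun i => Sum.elim a b (ofLex i)) hx hx0 I.card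
          (fun s j => Sum.elim (A (I.orderEmbOfFin rfl s)) (B (I.orderEmbOfFin rfl s)) (ofLex j))
    _ = ∑ L : Finset (Fin m), ∑ Λ : Finset (Fin m),
          if L.card + Λ.card = I.card then
            concatDet A B I L Λ • (oprod a L * oprod b Λ)
          else 0 := by
        rw [← Finset.sum_product']
        refine (Finset.sum_nbij' (fun q => q.1.map embL ∪ q.2.map embR)
          (fun S => (S.preimage (fun k => toLex (Sum.inl k)) embL.injective.injOn,
                     S.preimage (fun k => toLex (Sum.inr k)) embR.injective.injOn))
          (fun q _ => Finset.mem_univ _) (fun S _ => Finset.mem_product.2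
            ⟨Finset.mem_univ _, Finset.mem_univ _⟩) ?_ ?_ ?_).symm
        · -- left inverse : pairs → sets → pairs
          intro q _
          refine Prod.ext ?_ ?_ <;> dsimp only <;> ext k <;>
            simp only [Finset.preimage, Set.Finite.mem_toFinset, Set.mem_preimage, Finset.mem_coe, Finset.mem_union, Finset.mem_map] <;>
            constructor
          · rintro (⟨k', hk', he⟩ | ⟨k', hk', he⟩)
            · have : k' = k := Sum.inl.inj (toLex.injective he)
              rwa [← this]
            · exact absurd (toLex.injective (show toLex (Sum.inr k') = toLex (Sum.inl k) from he)) Sum.inr_ne_inl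
          · intro hk
            exact Or.inl ⟨k, hk, rfl⟩
          · rintro (⟨k', hk', he⟩ | ⟨k', hk', he⟩)
            · exact absurd (toLex.injective (show toLex (Sum.inl k') = toLex (Sum.inr k) from he)) Sum.inl_ne_inr
            · have : k' = k := Sum.inr.inj (toLex.injective he)
              rwa [← this]
          · intro hk
            exact Or.inr ⟨k, hk, rfl⟩
        · -- right inverse : sets → pairs → sets
          intro S _
          ext i
          simp only [Finset.mem_union, Finset.mem_map, Finset.preimage, Set.Finite.mem_toFinset, Set.mem_preimage, Finset.mem_coe]
          constructor
          · rintro (⟨k, hk, rfl⟩ | ⟨k, hk, rfl⟩)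
            · exact hk
            · exact hk
          · intro hi
            rcases lex_cases i with ⟨k, rfl⟩ | ⟨k, rfl⟩
            · exact Or.inl ⟨k, hi, rfl⟩
            · exact Or.inr ⟨k, hi, rfl⟩
        · -- values
          intro q _
          by_cases hcond : q.1.card + q.2.card = I.card
          · have hT : (q.1.map embL ∪ q.2.map embR).card = I.card :=
              (card_unionLR _ _).trans hcond
            rw [if_pos hcond, dif_pos hT]
            have hop : oprodG (fun i => Sum.elim a b (ofLex i)) (q.1.map embL ∪ q.2.map embR)
                = oprod a q.1 * oprod b q.2 := by
              rw [oprodG, sort_unionLR, List.map_append, List.prod_append,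
                List.map_map, List.map_map, oprod, oprod]
              rfl
            rw [hop]
            congr 1
            rw [concatDet, dif_pos hcond]
            apply congrArg Matrix.det
            ext s t
            rw [Matrix.of_apply, Matrix.of_apply]
            rw [orderEmbOfFin_cast hT (card_unionLR q.1 q.2) hcond.symm t]
            rw [orderEmb_unionLR]
            simp only [ofLex_toLex, Sum.elim_map]
            rcases hz : finSumFinEquiv.symm (Fin.cast hcond.symm t) with l | w
            · simp [Function.comp, Finset.coe_orderIsoOfFin_apply]
            · simp [Function.comp, Finset.coe_orderIsoOfFin_apply]
          · rw [if_neg hcond,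
              dif_neg (fun hT => hcond ((card_unionLR _ _).symm.trans hT)), zero_smul]


end
end

section
/- The 2m operators a_1,…,a_m, b_1,…,b_m on ℂ^{2^m} ⊗ ℂ^{2^m} defined by the parity trick satisfy the canonical anticommutation relations of 2m fermionic modes: for all i, j ∈ Fin m, a_i a_j + a_j a_i = 0, b_i b_j + b_j b_i = 0, a_i b_j + b_j a_i = 0, a_i (b_j)ᴴ + (b_j)ᴴ a_i = 0, (a_i)ᴴ b_j + b_j (a_i)ᴴ = 0, a_i (a_j)ᴴ + (a_j)ᴴ a_i = (if i = j then 1 else 0), and b_i (b_j)ᴴ + (b_j)ᴴ b_i = (if i = j then 1 else 0). -/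
open Matrix Finset Kronecker ComplexConjugate

noncomputable section

/-- Complex matrices indexed by `Fin (2^m)`. -/
abbrev Mat (m : ℕ) := Matrix (Fin (2^m)) (Fin (2^m)) ℂ

/-- Complex matrices on the tensor product `ℂ^{2^m} ⊗ ℂ^{2^m}`. -/
abbrev Mat2 (m : ℕ) := Matrix (Fin (2^m) × Fin (2^m)) (Fin (2^m) × Fin (2^m)) ℂ

variable {m : ℕ}

/-- The parity operator `P = ∏_j (1 - 2 f_jᴴ f_j)`. -/
def parity (f : Fin m → Mat m) : Mat m :=
  oprod (fun j => 1 - (2:ℂ) • ((f j)ᴴ * f j)) Finset.univ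

/-- Parity-trick operator `a_i = f_i ⊗ 1`. -/
def aOp (f : Fin m → Mat m) (i : Fin m) : Mat2 m := f i ⊗ₖ (1 : Mat m)

/-- Parity-trick operator `b_i = P ⊗ f_i`. -/
def bOp (f : Fin m → Mat m) (i : Fin m) : Mat2 m := parity f ⊗ₖ f i

/- ### Auxiliary lemmas -/

lemma kron_conjT {A B : Mat m} : (A ⊗ₖ B)ᴴ = Aᴴ ⊗ₖ Bᴴ := by
  ext ⟨i, j⟩ ⟨k, l⟩
  simp [Matrix.conjTranspose_apply, Matrix.kroneckerMap_apply, mul_comm]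

lemma refl_sq (N : Mat m) (h : N * N = N) : (1 - (2:ℂ) • N) * (1 - (2:ℂ) • N) = 1 := by
  simp only [mul_sub, sub_mul, mul_one, one_mul, mul_smul_comm, smul_mul_assoc, smul_smul, h]
  module

lemma list_conj_prod {x : Mat m} {Q : Fin m → Mat m} {c : Fin m → ℂ}
    (h : ∀ j, Q j * x = c j • (x * Q j)) :
    ∀ l : List (Fin m), (l.map Q).prod * x = (l.map c).prod • (x * (l.map Q).prod)
  | [] => by simp
  | j :: l => by
    have ih := list_conj_prod h l
    calc (((j :: l).map Q).prod) * x
        = Q j * ((l.map Q).prod * x) := by simp [mul_assoc]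
      _ = Q j * ((l.map c).prod • (x * (l.map Q).prod)) := by rw [ih]
      _ = (l.map c).prod • ((Q j * x) * (l.map Q).prod) := by
          rw [mul_smul_comm, mul_assoc]
      _ = (l.map c).prod • ((c j • (x * Q j)) * (l.map Q).prod) := by rw [h j]
      _ = (((j :: l).map c).prod) • (x * ((j :: l).map Q).prod) := by
          simp [smul_smul, mul_assoc, mul_comm]

lemma list_prod_herm {Q : Fin m → Mat m} (hH : ∀ j, (Q j)ᴴ = Q j)
    (hC : ∀ j k, Q j * Q k = Q k * Q j) :
    ∀ l : List (Fin m), ((l.map Q).prod)ᴴ = (l.map Q).prod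
  | [] => by simp
  | j :: l => by
    have ih := list_prod_herm hH hC l
    have hc : Commute (Q j) ((l.map Q).prod) := by
      apply Commute.list_prod_right
      intro y hy
      obtain ⟨k, -, rfl⟩ := List.mem_map.mp hy
      exact hC j k
    calc (((j :: l).map Q).prod)ᴴ = ((l.map Q).prod)ᴴ * (Q j)ᴴ := by
          simp [Matrix.conjTranspose_mul]
      _ = (l.map Q).prod * Q j := by rw [ih, hH j]
      _ = Q j * (l.map Q).prod := hc.symm
      _ = ((j :: l).map Q).prod := by simp

lemma list_prod_sq {Q : Fin m → Mat m} (h2 : ∀ j, Q j * Q j = 1)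
    (hC : ∀ j k, Q j * Q k = Q k * Q j) :
    ∀ l : List (Fin m), (l.map Q).prod * (l.map Q).prod = 1
  | [] => by simp
  | j :: l => by
    have ih := list_prod_sq h2 hC l
    have hc : Commute (Q j) ((l.map Q).prod) := by
      apply Commute.list_prod_right
      intro y hy
      obtain ⟨k, -, rfl⟩ := List.mem_map.mp hy
      exact hC j k
    calc (((j :: l).map Q).prod) * (((j :: l).map Q).prod)
        = Q j * ((l.map Q).prod * Q j) * (l.map Q).prod := by simp [mul_assoc]
      _ = Q j * (Q j * (l.map Q).prod) * (l.map Q).prod := by rw [hc.symm.eq]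
      _ = (Q j * Q j) * ((l.map Q).prod * (l.map Q).prod) := by
          simp [mul_assoc]
      _ = 1 := by rw [h2 j, ih, one_mul]

lemma sign_prod (i : Fin m) : (((univ : Finset (Fin m)).sort (· ≤ ·)).map
    fun j => if j = i then (-1:ℂ) else 1).prod = -1 := by
  have hperm : List.Perm ((((univ : Finset (Fin m)).sort (· ≤ ·)).map
      fun j => if j = i then (-1:ℂ) else 1))
      ((univ : Finset (Fin m)).toList.map fun j => if j = i then (-1:ℂ) else 1) :=
    (Finset.sort_perm_toList _ _).map _
  rw [hperm.prod_eq, Finset.prod_map_toList]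
  simp

/-- The parity-trick operators `a_i = f_i ⊗ 1`, `b_i = P ⊗ f_i` satisfy the CAR of
`2m` fermionic modes. -/
theorem parity_trick_CAR (f : Fin m → Mat m)
    (hff : ∀ i j : Fin m, f i * f j + f j * f i = 0)
    (hffd : ∀ i j : Fin m, f i * (f j)ᴴ + (f j)ᴴ * f i = if i = j then 1 else 0) :
    (∀ i j : Fin m, aOp f i * aOp f j + aOp f j * aOp f i = 0) ∧
    (∀ i j : Fin m, bOp f i * bOp f j + bOp f j * bOp f i = 0) ∧
    (∀ i j : Fin m, aOp f i * bOp f j + bOp f j * aOp f i = 0) ∧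
    (∀ i j : Fin m, aOp f i * (bOp f j)ᴴ + (bOp f j)ᴴ * aOp f i = 0) ∧
    (∀ i j : Fin m, (aOp f i)ᴴ * bOp f j + bOp f j * (aOp f i)ᴴ = 0) ∧
    (∀ i j : Fin m, aOp f i * (aOp f j)ᴴ + (aOp f j)ᴴ * aOp f i = if i = j then 1 else 0) ∧
    (∀ i j : Fin m, bOp f i * (bOp f j)ᴴ + (bOp f j)ᴴ * bOp f i = if i = j then 1 else 0) := by
  set Q : Fin m → Mat m := fun j => 1 - (2:ℂ) • ((f j)ᴴ * f j) with hQdef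
  set l : List (Fin m) := (Finset.univ : Finset (Fin m)).sort (· ≤ ·) with hldef
  have hP : parity f = (l.map Q).prod := rfl
  -- basic consequences of the CAR
  have hff' : ∀ i j, f i * f j = -(f j * f i) := fun i j =>
    eq_neg_of_add_eq_zero_left (hff i j)
  have hsq : ∀ i, f i * f i = 0 := by
    intro i
    have h2 : (2:ℂ) • (f i * f i) = 0 := by
      rw [two_smul]; exact hff i i
    simpa using h2
  have hdsq : ∀ i, (f i)ᴴ * (f i)ᴴ = 0 := by
    intro i
    have := congrArg conjTranspose (hsq i)
    simpa [Matrix.conjTranspose_mul] using this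
  have hii : ∀ i, f i * (f i)ᴴ = 1 - (f i)ᴴ * f i := by
    intro i
    have := hffd i i
    simp only [if_pos rfl, ↓reduceIte] at this
    linear_combination (norm := noncomm_ring) this
  have hfd : ∀ i j, i ≠ j → (f j)ᴴ * f i = -(f i * (f j)ᴴ) := by
    intro i j h
    have := hffd i j
    simp only [if_neg h] at this
    linear_combination (norm := noncomm_ring) this
  -- properties of the factors Q j
  have hQf : ∀ j i, Q j * f i = (if j = i then (-1:ℂ) else 1) • (f i * Q j) := by
    intro j i
    by_cases h : j = i
    · subst h
      have h1 : Q j * f j = f j := by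
        simp only [hQdef]
        rw [sub_mul, one_mul, smul_mul_assoc, mul_assoc, hsq j, mul_zero, smul_zero, sub_zero]
      have h2 : f j * Q j = -(f j) := by
        simp only [hQdef]
        rw [mul_sub, mul_one, mul_smul_comm, ← mul_assoc, hii j, sub_mul, one_mul,
          mul_assoc, hsq j, mul_zero, sub_zero]
        module
      rw [if_pos rfl, h1, h2]
      module
    · have key : ((f j)ᴴ * f j) * f i = f i * ((f j)ᴴ * f j) := by
        rw [mul_assoc, hff' j i, mul_neg, ← mul_assoc, hfd i j (Ne.symm h), neg_mul,
          neg_neg, mul_assoc]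
      rw [if_neg h, one_smul]
      simp only [hQdef]
      rw [sub_mul, mul_sub, one_mul, mul_one, smul_mul_assoc, mul_smul_comm, key]
  have hQH : ∀ j, (Q j)ᴴ = Q j := by
    intro j
    simp [hQdef, Matrix.conjTranspose_smul]
  have hQfd : ∀ j i, Q j * (f i)ᴴ = (if j = i then (-1:ℂ) else 1) • ((f i)ᴴ * Q j) := by
    intro j i
    have h := congrArg conjTranspose (hQf j i)
    rw [Matrix.conjTranspose_mul, Matrix.conjTranspose_smul, Matrix.conjTranspose_mul,
      hQH j] at h
    by_cases hji : j = i
    · simp only [if_pos hji] at h ⊢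
      rw [show star (-1:ℂ) = (-1:ℂ) by simp] at h
      rw [h]
      module
    · simp only [if_neg hji] at h ⊢
      rw [show star (1:ℂ) = (1:ℂ) by simp] at h
      rw [h]
      module
  have hQC : ∀ j k, Q j * Q k = Q k * Q j := by
    intro j k
    have key : Commute (Q j) ((f k)ᴴ * f k) := by
      show Q j * ((f k)ᴴ * f k) = ((f k)ᴴ * f k) * Q j
      rw [← mul_assoc, hQfd j k, smul_mul_assoc, mul_assoc, hQf j k, mul_smul_comm,
        smul_smul]
      by_cases h : j = k <;> simp [h, mul_assoc]
    have hcom : Commute (Q j) ((1 : Mat m) - (2:ℂ) • ((f k)ᴴ * f k)) :=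
      (Commute.one_right _).sub_right (key.smul_right _)
    exact hcom
  have hQ2 : ∀ j, Q j * Q j = 1 := by
    intro j
    have hNN : ((f j)ᴴ * f j) * ((f j)ᴴ * f j) = (f j)ᴴ * f j := by
      rw [mul_assoc, ← mul_assoc (f j), hii j, sub_mul, one_mul, mul_sub,
        ← mul_assoc, ← mul_assoc, hdsq j, zero_mul, zero_mul, sub_zero]
    exact refl_sq _ hNN
  -- properties of the parity operator
  have hPf : ∀ i, parity f * f i = -(f i * parity f) := by
    intro i
    rw [hP, list_conj_prod (fun j => hQf j i) l, hldef, sign_prod i]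
    module
  have hPfd : ∀ i, parity f * (f i)ᴴ = -((f i)ᴴ * parity f) := by
    intro i
    rw [hP, list_conj_prod (fun j => hQfd j i) l, hldef, sign_prod i]
    module
  have hPH : (parity f)ᴴ = parity f := by
    rw [hP]; exact list_prod_herm hQH hQC l
  have hPP : parity f * parity f = 1 := by
    rw [hP]; exact list_prod_sq hQ2 hQC l
  refine ⟨?_, ?_, ?_, ?_, ?_, ?_, ?_⟩
  · intro i j
    simp only [aOp, ← Matrix.mul_kronecker_mul, Matrix.one_mul, ← Matrix.add_kronecker,
      hff i j, Matrix.zero_kronecker]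
  · intro i j
    simp only [bOp, ← Matrix.mul_kronecker_mul, ← Matrix.kronecker_add,
      hff i j, Matrix.kronecker_zero]
  · intro i j
    simp only [aOp, bOp, ← Matrix.mul_kronecker_mul, Matrix.one_mul, Matrix.mul_one,
      ← Matrix.add_kronecker, hPf i]
    rw [add_neg_cancel, Matrix.zero_kronecker]
  · intro i j
    simp only [aOp, bOp, kron_conjT, hPH, ← Matrix.mul_kronecker_mul, Matrix.one_mul,
      Matrix.mul_one, ← Matrix.add_kronecker, hPf i]
    rw [add_neg_cancel, Matrix.zero_kronecker]
  · intro i j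
    simp only [aOp, bOp, kron_conjT, Matrix.conjTranspose_one, ← Matrix.mul_kronecker_mul,
      Matrix.one_mul, Matrix.mul_one, ← Matrix.add_kronecker, hPfd i]
    rw [add_neg_cancel, Matrix.zero_kronecker]
  · intro i j
    simp only [aOp, kron_conjT, Matrix.conjTranspose_one, ← Matrix.mul_kronecker_mul,
      Matrix.one_mul, ← Matrix.add_kronecker, hffd i j]
    split_ifs <;> simp [Matrix.one_kronecker_one, Matrix.zero_kronecker]
  · intro i j
    simp only [bOp, kron_conjT, hPH, ← Matrix.mul_kronecker_mul, hPP,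
      ← Matrix.kronecker_add, hffd i j]
    split_ifs <;> simp [Matrix.one_kronecker_one, Matrix.kronecker_zero]
end
end

section
/- Assume in addition that σ is even, i.e. P σ = σ P. Then for all finsets I, J ⊆ Fin m, Φ*(f_J† f_I) = Σ (−1)^{|Ξ|(|K|+|L|)} · conj(det(A_{J×K} | B_{J×Ξ})) · Γ_{Ξ;Ω} · det(A_{I×L} | B_{I×Ω}) · f_K† f_L, where the sum runs over all finsets K, L, Ξ, Ω ⊆ Fin m with |K| + |Ξ| = |J|, |L| + |Ω| = |I|, and |Ξ| + |Ω| even. -/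
open Matrix Finset Kronecker ComplexConjugate
open scoped ComplexOrder

noncomputable section

variable {m : ℕ}

/-- Partial trace over the second tensor factor. -/
def ptrace2 (M : Mat2 m) : Mat m := Matrix.of fun i j => ∑ s, M (i, s) (j, s)

/-- The Heisenberg-picture map `Φ*(X) = Tr₂[(1 ⊗ σ) Uᴴ (X ⊗ 1) U]`. -/
def PhiStar (U : Mat2 m) (σ : Mat m) (X : Mat m) : Mat m :=
  ptrace2 (((1 : Mat m) ⊗ₖ σ) * Uᴴ * (X ⊗ₖ (1 : Mat m)) * U)

/-- Environment correlation tensor `Γ_{Ξ;Ω} = Tr(σ f_Ξ† f_Ω)`. -/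
def Gam (f : Fin m → Mat m) (σ : Mat m) (Ξ Ω : Finset (Fin m)) : ℂ :=
  Matrix.trace (σ * (oprod f Ξ)ᴴ * oprod f Ω)

section lprod
variable {R : Type*} [Monoid R] {τ : Type*} [LinearOrder τ] [DecidableEq τ]

/-- Ordered product over a finset in any linear order. -/
def lprod (x : τ → R) (T : Finset τ) : R := ((T.sort (· ≤ ·)).map x).prod

@[simp] lemma lprod_empty (x : τ → R) : lprod x (∅ : Finset τ) = 1 := by
  simp [lprod]

lemma lprod_insert_min (x : τ → R) {a : τ} {T : Finset τ} (h : ∀ b ∈ T, a < b) :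
    lprod x (insert a T) = x a * lprod x T := by
  have ha : a ∉ T := fun hm => lt_irrefl a (h a hm)
  rw [lprod, Finset.sort_insert _ (fun b hb => (h b hb).le) ha]
  simp [lprod]

@[simp] lemma lprod_singleton (x : τ → R) (a : τ) : lprod x {a} = x a := by
  simp [lprod]

end lprod

section anticomm
variable {R : Type*} [Ring R] [Module ℂ R] [SMulCommClass ℂ R R] [IsScalarTower ℂ R R]
variable {τ : Type*} [LinearOrder τ] [DecidableEq τ]

omit [SMulCommClass ℂ R R] [IsScalarTower ℂ R R] in
lemma sq_zero_of_anticomm {y : R} (h : y * y = -(y * y)) : y * y = 0 := by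
  have h2 : (2:ℂ) • (y * y) = 0 := by
    rw [two_smul]; nth_rewrite 2 [h]; exact add_neg_cancel _
  have := congrArg (fun z => ((2:ℂ)⁻¹) • z) h2
  simpa [smul_smul] using this

/-- Multiplying an ordered product by `y t` on the left, `t` already in `T`, gives zero. -/
lemma mul_lprod_of_mem (y : τ → R) (hy : ∀ s t, y s * y t = -(y t * y s))
    {t : τ} {T : Finset τ} (ht : t ∈ T) : y t * lprod y T = 0 := by
  induction T using Finset.induction_on_min with
  | empty => simp at ht
  | insert a S hmin ih =>
    rw [lprod_insert_min _ hmin, ← mul_assoc]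
    rcases Finset.mem_insert.mp ht with rfl | htS
    · rw [sq_zero_of_anticomm (hy t t), zero_mul]
    · rw [hy t a, neg_mul, mul_assoc, ih htS, mul_zero, neg_zero]

/-- Moving `y t` into an ordered product over `T` (with `t ∉ T`) costs a sign counting
the elements of `T` below `t`. -/
lemma mul_lprod_of_not_mem (y : τ → R) (hy : ∀ s t, y s * y t = -(y t * y s))
    {t : τ} {T : Finset τ} (ht : t ∉ T) :
    y t * lprod y T = ((-1:ℂ) ^ (T.filter (· < t)).card) • lprod y (insert t T) := by
  induction T using Finset.induction_on_min with
  | empty =>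
    simp [lprod_insert_min]
  | insert a S hmin ih =>
    have haS : a ∉ S := fun hm => lt_irrefl a (hmin a hm)
    have htn : t ∉ S := fun hm => ht (Finset.mem_insert_of_mem hm)
    have hta : t ≠ a := fun h => ht (h ▸ Finset.mem_insert_self a S)
    rcases lt_or_gt_of_ne hta with hlt | hgt
    · -- t < a : t is below everything
      have hmin' : ∀ b ∈ insert a S, t < b := by
        intro b hb
        rcases Finset.mem_insert.mp hb with rfl | hbS
        · exact hlt
        · exact hlt.trans (hmin b hbS)
      have hfilt : (insert a S).filter (· < t) = ∅ := by
        apply Finset.filter_eq_empty_iff.mpr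
        intro b hb
        exact not_lt.mpr (hmin' b hb).le
      rw [hfilt]
      simp [lprod_insert_min _ hmin']
    · -- a < t
      have hfilt : (insert a S).filter (· < t) = insert a (S.filter (· < t)) := by
        rw [Finset.filter_insert, if_pos hgt]
      have hamem : a ∉ S.filter (· < t) := fun hm => haS (Finset.mem_of_mem_filter a hm)
      rw [lprod_insert_min _ hmin, ← mul_assoc, hy t a, neg_mul, mul_assoc, ih htn,
        hfilt, Finset.card_insert_of_notMem hamem]
      have hmin2 : ∀ b ∈ insert t S, a < b := by
        intro b hb
        rcases Finset.mem_insert.mp hb with rfl | hbS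
        · exact hgt
        · exact hmin b hbS
      have hic : insert t (insert a S) = insert a (insert t S) := Finset.insert_comm _ _ _
      rw [hic, lprod_insert_min _ hmin2, pow_succ]
      rw [mul_smul_comm, ← neg_smul]
      congr 1
      ring

end anticomm

set_option linter.unusedSectionVars false

section ldet
variable {ι τ : Type*} [LinearOrder ι] [LinearOrder τ] [DecidableEq τ]

/-- Minor determinant: rows given by a list, columns by a finset (in increasing order). -/
def ldet (M : ι → τ → ℂ) (l : List ι) (T : Finset τ) : ℂ :=
  if h : T.card = l.length then
    Matrix.det (Matrix.of fun r c : Fin l.length =>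
      M (l.get r) (T.orderEmbOfFin h c))
  else 0

lemma card_erase_emb {T : Finset τ} {n : ℕ} (h : T.card = n + 1) (j : Fin (n + 1)) :
    (T.erase (T.orderEmbOfFin h j)).card = n := by
  rw [Finset.card_erase_of_mem (Finset.orderEmbOfFin_mem T h j), h]
  omega

lemma orderEmbOfFin_erase {T : Finset τ} {n : ℕ} (h : T.card = n + 1) (j : Fin (n + 1))
    (k : Fin n) :
    (T.erase (T.orderEmbOfFin h j)).orderEmbOfFin (card_erase_emb h j) k
      = T.orderEmbOfFin h (j.succAbove k) := by
  have hfs : ∀ x : Fin n, T.orderEmbOfFin h (j.succAbove x) ∈ T.erase (T.orderEmbOfFin h j) := by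
    intro x
    refine Finset.mem_erase.mpr ⟨?_, Finset.orderEmbOfFin_mem T h _⟩
    intro hEq
    exact Fin.succAbove_ne j x ((T.orderEmbOfFin h).injective hEq)
  have hmono : StrictMono (fun x : Fin n => T.orderEmbOfFin h (j.succAbove x)) :=
    (T.orderEmbOfFin h).strictMono.comp (Fin.strictMono_succAbove j)
  have := Finset.orderEmbOfFin_unique (card_erase_emb h j) hfs hmono
  exact (congrFun this k).symm

lemma card_filter_lt_emb {T : Finset τ} {n : ℕ} (h : T.card = n) (j : Fin n) :
    (T.filter (· < T.orderEmbOfFin h j)).card = (j : ℕ) := by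
  have himg : T.filter (· < T.orderEmbOfFin h j)
      = (Finset.univ.filter (· < j)).image (T.orderEmbOfFin h) := by
    ext x
    simp only [Finset.mem_filter, Finset.mem_image, Finset.mem_univ, true_and]
    constructor
    · rintro ⟨hxT, hlt⟩
      have : x ∈ Set.range (T.orderEmbOfFin h) := by
        rw [Finset.range_orderEmbOfFin]; exact hxT
      obtain ⟨k, rfl⟩ := this
      exact ⟨k, (T.orderEmbOfFin h).strictMono.lt_iff_lt.mp hlt, rfl⟩
    · rintro ⟨k, hk, rfl⟩
      exact ⟨Finset.orderEmbOfFin_mem T h k, (T.orderEmbOfFin h).strictMono hk⟩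
  rw [himg, Finset.card_image_of_injective _ (T.orderEmbOfFin h).injective]
  have : Finset.univ.filter (· < j) = Finset.Iio j := by
    ext k; simp
  rw [this, Fin.card_Iio]

lemma ldet_nil (M : ι → τ → ℂ) (T : Finset τ) :
    ldet M ([] : List ι) T = if T = ∅ then 1 else 0 := by
  by_cases hT : T = ∅
  · subst hT
    rw [ldet, dif_pos (by simp), if_pos rfl]
    exact Matrix.det_fin_zero
  · rw [ldet, dif_neg, if_neg hT]
    simpa using fun h => hT (Finset.card_eq_zero.mp h)

lemma ldet_cons (M : ι → τ → ℂ) (i : ι) (l : List ι) (T : Finset τ)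
    (h : T.card = l.length + 1) :
    ldet M (i :: l) T = ∑ j : Fin (l.length + 1),
      (-1) ^ (j : ℕ) * M i (T.orderEmbOfFin h j)
        * ldet M l (T.erase (T.orderEmbOfFin h j)) := by
  have hlen : T.card = (i :: l).length := by simpa using h
  rw [ldet, dif_pos hlen]
  have : Matrix.det (Matrix.of fun r c : Fin (i :: l).length =>
        M ((i :: l).get r) (T.orderEmbOfFin hlen c))
      = Matrix.det (Matrix.of fun r c : Fin (l.length + 1) =>
        M ((i :: l).get r) (T.orderEmbOfFin h c)) := rfl
  rw [this, Matrix.det_succ_row_zero]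
  refine Finset.sum_congr rfl fun j _ => ?_
  have e1 : (Matrix.of fun r c : Fin (l.length + 1) =>
      M ((i :: l).get r) (T.orderEmbOfFin h c)) 0 j = M i (T.orderEmbOfFin h j) := rfl
  rw [e1]
  congr 1
  rw [ldet, dif_pos (card_erase_emb h j)]
  congr 1
  ext r c
  simp only [Matrix.submatrix_apply, Matrix.of_apply]
  rw [orderEmbOfFin_erase h j c]
  rfl

end ldet

section master
variable {R : Type*} [Ring R] [Module ℂ R] [SMulCommClass ℂ R R] [IsScalarTower ℂ R R]
variable {ι τ : Type*} [LinearOrder ι] [LinearOrder τ] [DecidableEq τ] [Fintype τ]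

/-- The fermionic minor-expansion ("Cauchy–Binet") lemma: an ordered product of linear
combinations of pairwise anticommuting square-zero generators expands into minors. -/
lemma master_list (y : τ → R) (hy : ∀ s t, y s * y t = -(y t * y s)) (M : ι → τ → ℂ) :
    ∀ l : List ι, (l.map (fun i => ∑ t, M i t • y t)).prod
      = ∑ T : Finset τ, ldet M l T • lprod y T := by
  intro l
  induction l with
  | nil =>
    rw [Finset.sum_eq_single (∅ : Finset τ)]
    · simp [ldet_nil]
    · intro T _ hT
      rw [ldet_nil, if_neg hT, zero_smul]
    · intro h
      exact absurd (Finset.mem_univ _) h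
  | cons i l ih =>
    rw [List.map_cons, List.prod_cons, ih, Finset.mul_sum]
    have step1 : ∀ T : Finset τ,
        (∑ t, M i t • y t) * (ldet M l T • lprod y T)
          = ∑ t, (if t ∈ T then 0 else
              ((-1:ℂ) ^ (T.filter (· < t)).card * (M i t * ldet M l T))
                • lprod y (insert t T)) := by
      intro T
      rw [Finset.sum_mul]
      refine Finset.sum_congr rfl fun t _ => ?_
      rw [smul_mul_smul_comm]
      by_cases ht : t ∈ T
      · rw [if_pos ht, mul_lprod_of_mem y hy ht, smul_zero]
      · rw [if_neg ht, mul_lprod_of_not_mem y hy ht, smul_comm, smul_smul]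
    simp_rw [step1]
    rw [Finset.sum_comm]
    -- now : ∑ t, ∑ T, if t ∈ T then 0 else (...) • lprod y (insert t T)
    have step2 : ∀ t : τ,
        (∑ T : Finset τ, (if t ∈ T then 0 else
            ((-1:ℂ) ^ (T.filter (· < t)).card * (M i t * ldet M l T))
              • lprod y (insert t T)))
          = ∑ T' : Finset τ, (if t ∈ T' then
              ((-1:ℂ) ^ ((T'.erase t).filter (· < t)).card
                * (M i t * ldet M l (T'.erase t))) • lprod y T' else 0) := by
      intro t
      have hL : (∑ T : Finset τ, (if t ∈ T then 0 else
            ((-1:ℂ) ^ (T.filter (· < t)).card * (M i t * ldet M l T))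
              • lprod y (insert t T)))
          = ∑ T ∈ Finset.univ.filter (fun T : Finset τ => t ∉ T),
            ((-1:ℂ) ^ (T.filter (· < t)).card * (M i t * ldet M l T))
              • lprod y (insert t T) := by
        rw [Finset.sum_filter]
        exact Finset.sum_congr rfl fun T _ => by by_cases h : t ∈ T <;> simp [h]
      have hR : (∑ T' : Finset τ, (if t ∈ T' then
            ((-1:ℂ) ^ ((T'.erase t).filter (· < t)).card
              * (M i t * ldet M l (T'.erase t))) • lprod y T' else 0))
          = ∑ T' ∈ Finset.univ.filter (fun T' : Finset τ => t ∈ T'),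
            ((-1:ℂ) ^ ((T'.erase t).filter (· < t)).card
              * (M i t * ldet M l (T'.erase t))) • lprod y T' :=
        (Finset.sum_filter _ _).symm
      rw [hL, hR]
      refine Finset.sum_nbij' (fun T => insert t T) (fun T' => T'.erase t) ?_ ?_ ?_ ?_ ?_
      · intro T hT
        simp only [Finset.mem_filter, Finset.mem_univ, true_and] at *
        exact Finset.mem_insert_self t T
      · intro T' hT'
        simp only [Finset.mem_filter, Finset.mem_univ, true_and] at *
        exact Finset.notMem_erase t T'
      · intro T hT
        simp only [Finset.mem_filter, Finset.mem_univ, true_and] at hT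
        exact Finset.erase_insert hT
      · intro T' hT'
        simp only [Finset.mem_filter, Finset.mem_univ, true_and] at hT'
        exact Finset.insert_erase hT'
      · intro T hT
        simp only [Finset.mem_filter, Finset.mem_univ, true_and] at hT
        rw [Finset.erase_insert hT]
    simp_rw [step2]
    rw [Finset.sum_comm]
    refine Finset.sum_congr rfl fun T' _ => ?_
    -- per T' : inner sum over t equals ldet (i::l) T' • lprod y T'
    rw [Finset.sum_ite_mem, Finset.univ_inter, ← Finset.sum_smul]
    congr 1
    by_cases hcard : T'.card = l.length + 1
    · rw [ldet_cons M i l T' hcard]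
      refine (Finset.sum_bij
        (fun (j : Fin (l.length + 1)) (_ : j ∈ Finset.univ) => T'.orderEmbOfFin hcard j)
        (fun j _ => Finset.orderEmbOfFin_mem T' hcard j)
        (fun a _ b _ hab => (T'.orderEmbOfFin hcard).injective hab)
        (fun x hx => ?_) (fun j _ => ?_)).symm
      · have : x ∈ Set.range (T'.orderEmbOfFin hcard) := by
          rw [Finset.range_orderEmbOfFin]; exact hx
        obtain ⟨k, rfl⟩ := this
        exact ⟨k, Finset.mem_univ k, rfl⟩
      have hfe : ((T'.erase (T'.orderEmbOfFin hcard j)).filter (· < T'.orderEmbOfFin hcard j))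
          = T'.filter (· < T'.orderEmbOfFin hcard j) := by
        ext x
        simp only [Finset.mem_filter, Finset.mem_erase]
        constructor
        · rintro ⟨⟨_, hxT⟩, hlt⟩; exact ⟨hxT, hlt⟩
        · rintro ⟨hxT, hlt⟩; exact ⟨⟨ne_of_lt hlt, hxT⟩, hlt⟩
      rw [hfe, card_filter_lt_emb hcard j]
      ring
    · rw [ldet, dif_neg (by simpa using hcard)]
      refine Finset.sum_eq_zero fun t ht => ?_
      have : (T'.erase t).card ≠ l.length := by
        rw [Finset.card_erase_of_mem ht]
        intro hEq
        apply hcard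
        have hpos : 0 < T'.card := Finset.card_pos.mpr ⟨t, ht⟩
        omega
      rw [ldet, dif_neg this, mul_zero, mul_zero]

end master

variable {m : ℕ}

lemma oprod_eq_lprod {R : Type*} [Monoid R] (x : Fin m → R) (I : Finset (Fin m)) :
    oprod x I = lprod x I := rfl

section car
variable (f : Fin m → Mat m)
variable (hff : ∀ i j : Fin m, f i * f j + f j * f i = 0)
variable (hffd : ∀ i j : Fin m, f i * (f j)ᴴ + (f j)ᴴ * f i = if i = j then 1 else 0)

/-- elementary parity factor -/
def qf (j : Fin m) : Mat m := 1 - (2:ℂ) • ((f j)ᴴ * f j)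

lemma parity_eq : parity f = lprod (qf f) Finset.univ := rfl

include hff in
lemma f_sq (i : Fin m) : f i * f i = 0 := by
  have h0 := hff i i
  have h2 : (2:ℂ) • (f i * f i) = 0 := by rw [two_smul]; exact h0
  have h3 := congrArg (fun z => ((2:ℂ)⁻¹) • z) h2
  simpa [smul_smul] using h3

include hff in
lemma ff_anti (i j : Fin m) : f i * f j = -(f j * f i) :=
  eq_neg_of_add_eq_zero_left (hff i j)

include hffd in
lemma ffd_anti {i j : Fin m} (h : i ≠ j) : f i * (f j)ᴴ = -((f j)ᴴ * f i) :=
  eq_neg_of_add_eq_zero_left (by rw [hffd i j, if_neg h])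

include hffd in
lemma fdf_anti {i j : Fin m} (h : i ≠ j) : (f i)ᴴ * f j = -(f j * (f i)ᴴ) :=
  eq_neg_of_add_eq_zero_left (by rw [add_comm, hffd j i, if_neg (fun hh => h hh.symm)])

include hff in
lemma fdfd_anti (i j : Fin m) : (f i)ᴴ * (f j)ᴴ = -((f j)ᴴ * (f i)ᴴ) := by
  have h0 := congrArg Matrix.conjTranspose (ff_anti f hff j i)
  simpa [Matrix.conjTranspose_mul] using h0

include hffd in
lemma fdf_self (i : Fin m) : f i * (f i)ᴴ = 1 - (f i)ᴴ * f i :=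
  eq_sub_of_add_eq (by rw [hffd i i, if_pos rfl])

omit hffd in
lemma qf_herm (j : Fin m) : (qf f j)ᴴ = qf f j := by
  simp [qf, Matrix.conjTranspose_sub, Matrix.conjTranspose_smul, Matrix.conjTranspose_mul]

include hff hffd in
lemma nf_idem (j : Fin m) : ((f j)ᴴ * f j) * ((f j)ᴴ * f j) = (f j)ᴴ * f j := by
  have h1 : f j * ((f j)ᴴ * f j) = f j := by
    rw [← mul_assoc, fdf_self f hffd, sub_mul, one_mul, mul_assoc, f_sq f hff, mul_zero,
      sub_zero]
  rw [mul_assoc, h1]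

include hff hffd in
lemma qf_sq (j : Fin m) : qf f j * qf f j = 1 := by
  have hn := nf_idem f hff hffd j
  simp only [qf, sub_mul, mul_sub, one_mul, mul_one, Matrix.mul_smul, Matrix.smul_mul,
    smul_smul, hn]
  module

include hff hffd in
lemma f_nf_comm {i j : Fin m} (h : i ≠ j) :
    f i * ((f j)ᴴ * f j) = ((f j)ᴴ * f j) * f i := by
  rw [← mul_assoc, ffd_anti f hffd h, neg_mul, mul_assoc, ff_anti f hff i j, mul_neg, neg_neg,
    mul_assoc]

include hff hffd in
lemma fd_nf_comm {i j : Fin m} (h : i ≠ j) :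
    (f i)ᴴ * ((f j)ᴴ * f j) = ((f j)ᴴ * f j) * (f i)ᴴ := by
  have h0 := congrArg Matrix.conjTranspose (f_nf_comm f hff hffd h)
  simpa [Matrix.conjTranspose_mul, mul_assoc] using h0.symm

include hff hffd in
lemma nf_nf_comm (i j : Fin m) :
    ((f i)ᴴ * f i) * ((f j)ᴴ * f j) = ((f j)ᴴ * f j) * ((f i)ᴴ * f i) := by
  by_cases h : i = j
  · subst h; rfl
  · calc ((f i)ᴴ * f i) * ((f j)ᴴ * f j)
        = (f i)ᴴ * (f i * ((f j)ᴴ * f j)) := mul_assoc _ _ _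
      _ = (f i)ᴴ * (((f j)ᴴ * f j) * f i) := by rw [f_nf_comm f hff hffd h]
      _ = ((f i)ᴴ * ((f j)ᴴ * f j)) * f i := (mul_assoc _ _ _).symm
      _ = (((f j)ᴴ * f j) * (f i)ᴴ) * f i := by rw [fd_nf_comm f hff hffd h]
      _ = ((f j)ᴴ * f j) * ((f i)ᴴ * f i) := mul_assoc _ _ _

include hff hffd in
lemma qf_qf_comm (i j : Fin m) : qf f i * qf f j = qf f j * qf f i := by
  simp only [qf, sub_mul, mul_sub, one_mul, mul_one, Matrix.smul_mul, Matrix.mul_smul,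
    nf_nf_comm f hff hffd i j]
  module

include hff hffd in
lemma qf_f_comm {i j : Fin m} (h : i ≠ j) : qf f j * f i = f i * qf f j := by
  simp only [qf, sub_mul, mul_sub, one_mul, mul_one, Matrix.smul_mul, Matrix.mul_smul,
    f_nf_comm f hff hffd h]

include hff hffd in
lemma qf_f_anti (i : Fin m) : qf f i * f i = -(f i * qf f i) := by
  have h1 : qf f i * f i = f i := by
    simp only [qf, sub_mul, one_mul, Matrix.smul_mul, mul_assoc, f_sq f hff, mul_zero,
      smul_zero, sub_zero]
  have h2 : f i * qf f i = -(f i) := by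
    have hx : f i * ((f i)ᴴ * f i) = f i := by
      rw [← mul_assoc, fdf_self f hffd, sub_mul, one_mul, mul_assoc, f_sq f hff, mul_zero,
        sub_zero]
    simp only [qf, mul_sub, mul_one, Matrix.mul_smul, hx]
    module
  rw [h1, h2, neg_neg]

include hff hffd in
lemma lprod_qf_comm (S : Finset (Fin m)) (a : Fin m) :
    lprod (qf f) S * qf f a = qf f a * lprod (qf f) S := by
  induction S using Finset.induction_on_min with
  | empty => simp
  | insert b T hmin ih =>
    rw [lprod_insert_min _ hmin, mul_assoc, ih, ← mul_assoc,
      qf_qf_comm f hff hffd b a, mul_assoc]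

include hff hffd in
lemma lprod_qf_sq (S : Finset (Fin m)) :
    lprod (qf f) S * lprod (qf f) S = 1 := by
  induction S using Finset.induction_on_min with
  | empty => simp
  | insert b T hmin ih =>
    rw [lprod_insert_min _ hmin]
    rw [show qf f b * lprod (qf f) T * (qf f b * lprod (qf f) T)
        = qf f b * (lprod (qf f) T * qf f b) * lprod (qf f) T by
      simp only [mul_assoc]]
    rw [lprod_qf_comm f hff hffd T b]
    rw [show qf f b * (qf f b * lprod (qf f) T) * lprod (qf f) T
        = (qf f b * qf f b) * (lprod (qf f) T * lprod (qf f) T) by simp only [mul_assoc]]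
    rw [qf_sq f hff hffd, one_mul, ih]

include hff hffd in
lemma lprod_qf_herm (S : Finset (Fin m)) :
    (lprod (qf f) S)ᴴ = lprod (qf f) S := by
  induction S using Finset.induction_on_min with
  | empty => simp
  | insert b T hmin ih =>
    rw [lprod_insert_min _ hmin, Matrix.conjTranspose_mul, ih, qf_herm f,
      lprod_qf_comm f hff hffd T b]

include hff hffd in
lemma parity_sq : parity f * parity f = 1 := lprod_qf_sq f hff hffd _

include hff hffd in
lemma parity_herm : (parity f)ᴴ = parity f := lprod_qf_herm f hff hffd _

include hff hffd in
lemma lprod_qf_f (S : Finset (Fin m)) (i : Fin m) :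
    lprod (qf f) S * f i
      = (if i ∈ S then (-1:ℂ) else 1) • (f i * lprod (qf f) S) := by
  induction S using Finset.induction_on_min with
  | empty => simp
  | insert b T hmin ih =>
    have hbT : b ∉ T := fun hm => lt_irrefl b (hmin b hm)
    rw [lprod_insert_min _ hmin, mul_assoc, ih]
    by_cases hib : i = b
    · subst hib
      rw [if_pos (Finset.mem_insert_self i T), if_neg hbT, one_smul, ← mul_assoc,
        qf_f_anti f hff hffd i, neg_smul, one_smul, neg_mul, mul_assoc]
    · rw [Matrix.mul_smul, ← mul_assoc, qf_f_comm f hff hffd (fun h => hib h), mul_assoc]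
      by_cases hiT : i ∈ T
      · rw [if_pos hiT, if_pos (Finset.mem_insert_of_mem hiT)]
      · rw [if_neg hiT, if_neg (by simp [hib, hiT])]

include hff hffd in
lemma parity_f_anti (i : Fin m) : parity f * f i = -(f i * parity f) := by
  have h0 := lprod_qf_f f hff hffd Finset.univ i
  rw [if_pos (Finset.mem_univ i)] at h0
  rw [parity_eq, h0, neg_smul, one_smul]

include hff hffd in
lemma parity_fd_anti (i : Fin m) : parity f * (f i)ᴴ = -((f i)ᴴ * parity f) := by
  have h0 := congrArg Matrix.conjTranspose (parity_f_anti f hff hffd i)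
  rw [Matrix.conjTranspose_mul, Matrix.conjTranspose_neg, Matrix.conjTranspose_mul,
    parity_herm f hff hffd] at h0
  rw [h0, neg_neg]

end car

section kron
variable {n : Type*} [Fintype n] [DecidableEq n]

lemma kron_conjTranspose (X Y : Matrix n n ℂ) : (X ⊗ₖ Y)ᴴ = Xᴴ ⊗ₖ Yᴴ := by
  ext ⟨i, s⟩ ⟨j, t⟩
  simp [Matrix.conjTranspose_apply, Matrix.kroneckerMap_apply, mul_comm]

end kron

section ops
variable (f : Fin m → Mat m)
variable (hff : ∀ i j : Fin m, f i * f j + f j * f i = 0)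
variable (hffd : ∀ i j : Fin m, f i * (f j)ᴴ + (f j)ᴴ * f i = if i = j then 1 else 0)

lemma oprod_aOp (S : Finset (Fin m)) : oprod (aOp f) S = oprod f S ⊗ₖ (1 : Mat m) := by
  rw [oprod_eq_lprod, oprod_eq_lprod]
  induction S using Finset.induction_on_min with
  | empty => simp [Matrix.one_kronecker_one]
  | insert b T hmin ih =>
    rw [lprod_insert_min _ hmin, lprod_insert_min _ hmin, ih, aOp,
      ← Matrix.mul_kronecker_mul, one_mul]

include hff hffd in
lemma oprod_bOp (S : Finset (Fin m)) :
    oprod (bOp f) S = ((parity f) ^ S.card) ⊗ₖ oprod f S := by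
  rw [oprod_eq_lprod, oprod_eq_lprod]
  induction S using Finset.induction_on_min with
  | empty => simp [Matrix.one_kronecker_one]
  | insert b T hmin ih =>
    have hbT : b ∉ T := fun hm => lt_irrefl b (hmin b hm)
    rw [lprod_insert_min _ hmin, lprod_insert_min _ hmin, ih, bOp,
      ← Matrix.mul_kronecker_mul, Finset.card_insert_of_notMem hbT, pow_succ']

include hff hffd in
lemma aOp_anti (i j : Fin m) : aOp f i * aOp f j = -(aOp f j * aOp f i) := by
  rw [aOp, aOp, ← Matrix.mul_kronecker_mul, ← Matrix.mul_kronecker_mul, one_mul,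
    ff_anti f hff i j]
  ext ⟨p, s⟩ ⟨r, t⟩
  simp [Matrix.kroneckerMap_apply]

include hff hffd in
lemma bOp_anti (i j : Fin m) : bOp f i * bOp f j = -(bOp f j * bOp f i) := by
  rw [bOp, bOp, ← Matrix.mul_kronecker_mul, ← Matrix.mul_kronecker_mul,
    ff_anti f hff i j]
  ext ⟨p, s⟩ ⟨r, t⟩
  simp [Matrix.kroneckerMap_apply]

include hff hffd in
lemma ab_anti (i j : Fin m) : aOp f i * bOp f j = -(bOp f j * aOp f i) := by
  rw [aOp, bOp, ← Matrix.mul_kronecker_mul, ← Matrix.mul_kronecker_mul, one_mul, mul_one]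
  have h0 : f i * parity f = -(parity f * f i) := by
    rw [parity_f_anti f hff hffd i, neg_neg]
  rw [h0]
  ext ⟨p, s⟩ ⟨r, t⟩
  simp [Matrix.kroneckerMap_apply]

include hff hffd in
lemma ba_anti (i j : Fin m) : bOp f i * aOp f j = -(aOp f j * bOp f i) := by
  have h0 := ab_anti f hff hffd j i
  rw [h0, neg_neg]

end ops

section ptrace
variable {m : ℕ}

lemma ptrace2_sum {α : Type*} (s : Finset α) (g : α → Mat2 m) :
    ptrace2 (∑ x ∈ s, g x) = ∑ x ∈ s, ptrace2 (g x) := by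
  ext i j
  simp only [ptrace2, Matrix.of_apply, Finset.sum_apply, Matrix.sum_apply]
  rw [Finset.sum_comm]

lemma ptrace2_smul (c : ℂ) (X : Mat2 m) : ptrace2 (c • X) = c • ptrace2 X := by
  ext i j
  simp [ptrace2, Finset.mul_sum]

lemma ptrace2_kron (X M : Mat m) : ptrace2 (X ⊗ₖ M) = M.trace • X := by
  ext i j
  simp [ptrace2, Matrix.trace, Matrix.kroneckerMap_apply, Finset.mul_sum, Matrix.diag,
    mul_comm]

end ptrace

section pparity
variable (f : Fin m → Mat m)
variable (hff : ∀ i j : Fin m, f i * f j + f j * f i = 0)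
variable (hffd : ∀ i j : Fin m, f i * (f j)ᴴ + (f j)ᴴ * f i = if i = j then 1 else 0)

include hff hffd in
lemma parity_oprod (S : Finset (Fin m)) :
    parity f * oprod f S = ((-1:ℂ) ^ S.card) • (oprod f S * parity f) := by
  rw [oprod_eq_lprod]
  induction S using Finset.induction_on_min with
  | empty => simp
  | insert b T hmin ih =>
    have hbT : b ∉ T := fun hm => lt_irrefl b (hmin b hm)
    rw [lprod_insert_min _ hmin, ← mul_assoc, parity_f_anti f hff hffd b, neg_mul, mul_assoc,
      ih, Finset.card_insert_of_notMem hbT, pow_succ]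
    simp only [Matrix.mul_smul, smul_mul_assoc, mul_assoc]
    rw [← neg_smul]
    congr 1
    ring

include hff hffd in
lemma parity_oprod_d (S : Finset (Fin m)) :
    parity f * (oprod f S)ᴴ = ((-1:ℂ) ^ S.card) • ((oprod f S)ᴴ * parity f) := by
  rw [oprod_eq_lprod]
  induction S using Finset.induction_on_min with
  | empty => simp
  | insert b T hmin ih =>
    have hbT : b ∉ T := fun hm => lt_irrefl b (hmin b hm)
    rw [lprod_insert_min _ hmin, Matrix.conjTranspose_mul, ← mul_assoc, ih,
      Finset.card_insert_of_notMem hbT, pow_succ, Matrix.smul_mul, mul_assoc,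
      parity_fd_anti f hff hffd b]
    simp only [Matrix.mul_smul, smul_mul_assoc, mul_neg, mul_assoc, smul_neg]
    rw [← neg_smul]
    congr 1
    ring

lemma parity_pow_mul (n : ℕ) (Z : Mat m) (d : ℕ)
    (hZ : parity f * Z = ((-1:ℂ) ^ d) • (Z * parity f)) :
    (parity f) ^ n * Z = ((-1:ℂ) ^ (n * d)) • (Z * (parity f) ^ n) := by
  induction n with
  | zero => simp
  | succ k ih =>
    rw [pow_succ', mul_assoc, ih, Matrix.mul_smul, ← mul_assoc, hZ, Matrix.smul_mul, smul_smul,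
      ← pow_add]
    rw [show k * d + d = (k + 1) * d by ring]
    simp only [mul_assoc]

include hff hffd in
lemma parity_pow_even (n : ℕ) (h : n % 2 = 0) : (parity f) ^ n = 1 := by
  obtain ⟨k, rfl⟩ : ∃ k, n = 2 * k := ⟨n / 2, by omega⟩
  rw [pow_mul, pow_two, parity_sq f hff hffd, one_pow]

include hff hffd in
lemma gam_odd_vanish (σ : Mat m) (hσeven : parity f * σ = σ * parity f)
    (Ξ Ω : Finset (Fin m)) (hodd : (Ξ.card + Ω.card) % 2 = 1) :
    Matrix.trace (σ * (oprod f Ξ)ᴴ * oprod f Ω) = 0 := by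
  rw [mul_assoc]
  set P := parity f with hP
  set X := (oprod f Ξ)ᴴ * oprod f Ω with hX
  have hXP : P * X = ((-1:ℂ) ^ (Ξ.card + Ω.card)) • (X * P) := by
    rw [hX, ← mul_assoc, hP, parity_oprod_d f hff hffd Ξ, Matrix.smul_mul, mul_assoc,
      parity_oprod f hff hffd Ω, Matrix.mul_smul, smul_smul, ← pow_add, mul_assoc]
  have hsign : ((-1:ℂ) ^ (Ξ.card + Ω.card)) = -1 :=
    Odd.neg_one_pow (Nat.odd_iff.mpr hodd)
  have hPXP : P * (σ * X) * P = (-1:ℂ) • (σ * X) := by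
    calc P * (σ * X) * P = (P * σ) * (X * P) := by simp only [mul_assoc]
      _ = σ * (P * (X * P)) := by rw [hσeven]; simp only [mul_assoc]
      _ = σ * ((P * X) * P) := by simp only [mul_assoc]
      _ = σ * ((((-1:ℂ) ^ (Ξ.card + Ω.card)) • (X * P)) * P) := by rw [hXP]
      _ = ((-1:ℂ) ^ (Ξ.card + Ω.card)) • (σ * (X * (P * P))) := by
          simp only [Matrix.smul_mul, Matrix.mul_smul, mul_assoc]
      _ = (-1:ℂ) • (σ * X) := by
          rw [hsign, hP, parity_sq f hff hffd, mul_one]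
  have htr : Matrix.trace (P * (σ * X) * P) = Matrix.trace (σ * X) := by
    rw [Matrix.trace_mul_cycle]
    rw [show P * P * (σ * X) = (P * P) * (σ * X) from rfl, hP, parity_sq f hff hffd, one_mul]
  have key : Matrix.trace (σ * X) = -Matrix.trace (σ * X) := by
    conv_lhs => rw [← htr, hPXP]
    simp
  have h2 : (2:ℂ) * Matrix.trace (σ * X) = 0 := by linear_combination key
  have h3 := mul_eq_zero.mp h2
  simpa using h3

end pparity

section lexsum
variable {m : ℕ}

/-- index type for the combined generators `a` (left) and `b` (right), lex ordered. -/
abbrev LSum (m : ℕ) := Fin m ⊕ₗ Fin m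

def inlE (k : Fin m) : LSum m := toLex (Sum.inl k)
def inrE (k : Fin m) : LSum m := toLex (Sum.inr k)

lemma inlE_injective : Function.Injective (inlE (m := m)) := by
  intro a b h
  simpa [inlE] using h

lemma inrE_injective : Function.Injective (inrE (m := m)) := by
  intro a b h
  simpa [inrE] using h

lemma inlE_lt_inlE {a b : Fin m} : inlE a < inlE b ↔ a < b := Sum.Lex.inl_lt_inl_iff

lemma inrE_lt_inrE {a b : Fin m} : inrE a < inrE b ↔ a < b := Sum.Lex.inr_lt_inr_iff

lemma inlE_lt_inrE (a b : Fin m) : inlE a < inrE b := Sum.Lex.inl_lt_inr _ _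

/-- the finset of combined indices corresponding to a pair of finsets -/
def eKX (K Ξ : Finset (Fin m)) : Finset (LSum m) :=
  (K.map ⟨inlE, inlE_injective⟩) ∪ (Ξ.map ⟨inrE, inrE_injective⟩)

lemma disjoint_eKX (K Ξ : Finset (Fin m)) :
    Disjoint (K.map ⟨inlE, inlE_injective⟩) (Ξ.map ⟨inrE, inrE_injective⟩) := by
  rw [Finset.disjoint_left]
  rintro t ht ht'
  obtain ⟨a, _, rfl⟩ := Finset.mem_map.mp ht
  obtain ⟨b, _, hb⟩ := Finset.mem_map.mp ht'
  exact absurd hb (by simp [inlE, inrE])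

lemma card_eKX (K Ξ : Finset (Fin m)) : (eKX K Ξ).card = K.card + Ξ.card := by
  rw [eKX, Finset.card_union_of_disjoint (disjoint_eKX K Ξ), Finset.card_map,
    Finset.card_map]

lemma mem_eKX {K Ξ : Finset (Fin m)} {t : LSum m} :
    t ∈ eKX K Ξ ↔ (∃ a ∈ K, inlE a = t) ∨ (∃ b ∈ Ξ, inrE b = t) := by
  simp [eKX, Finset.mem_union, Finset.mem_map]

/-- reindexing sums over finsets of the lex sum by pairs -/
lemma sum_finset_lsum {γ : Type*} [AddCommMonoid γ] (g : Finset (LSum m) → γ) :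
    ∑ T : Finset (LSum m), g T
      = ∑ K : Finset (Fin m), ∑ Ξ : Finset (Fin m), g (eKX K Ξ) := by
  have h1 : ∑ T : Finset (LSum m), g T
      = ∑ p : Finset (Fin m) × Finset (Fin m), g (eKX p.1 p.2) := by
    apply (Fintype.sum_bijective (fun p : Finset (Fin m) × Finset (Fin m) => eKX p.1 p.2)
      ?_ _ _ (fun p => rfl)).symm
    rw [Function.bijective_iff_has_inverse]
    refine ⟨fun T => (Finset.univ.filter (fun k => inlE k ∈ T),
                      Finset.univ.filter (fun k => inrE k ∈ T)), ?_, ?_⟩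
    · rintro ⟨K, Ξ⟩
      ext k
      · simp only [Finset.mem_filter, Finset.mem_univ, true_and, mem_eKX]
        constructor
        · rintro (⟨a, ha, h⟩ | ⟨b, hb, h⟩)
          · rwa [← inlE_injective h]
          · exact absurd h (by simp [inlE, inrE])
        · intro h; exact Or.inl ⟨k, h, rfl⟩
      · simp only [Finset.mem_filter, Finset.mem_univ, true_and, mem_eKX]
        constructor
        · rintro (⟨a, ha, h⟩ | ⟨b, hb, h⟩)
          · exact absurd h (by simp [inlE, inrE])
          · rwa [← inrE_injective h]
        · intro h; exact Or.inr ⟨k, h, rfl⟩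
    · intro T
      ext t
      rw [mem_eKX]
      constructor
      · rintro (⟨a, ha, rfl⟩ | ⟨b, hb, rfl⟩)
        · exact (Finset.mem_filter.mp ha).2
        · exact (Finset.mem_filter.mp hb).2
      · intro ht
        rcases ht' : ofLex t with a | b
        · left
          refine ⟨a, ?_, ?_⟩
          · simp only [Finset.mem_filter, Finset.mem_univ, true_and]
            have : t = inlE a := by
              simp only [inlE]
              rw [← ht']
              rfl
            rwa [← this]
          · simp only [inlE]
            rw [← ht']
            rfl
        · right
          refine ⟨b, ?_, ?_⟩
          · simp only [Finset.mem_filter, Finset.mem_univ, true_and]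
            have : t = inrE b := by
              simp only [inrE]
              rw [← ht']
              rfl
            rwa [← this]
          · simp only [inrE]
            rw [← ht']
            rfl
  rw [h1, Fintype.sum_prod_type]

end lexsum

section split
variable {m : ℕ}

lemma lprod_map {R : Type*} [Monoid R] {α β : Type*} [LinearOrder α] [LinearOrder β]
    (e : α ↪o β) (y : β → R) (S : Finset α) :
    lprod y (S.map e.toEmbedding) = lprod (fun a => y (e a)) S := by
  induction S using Finset.induction_on_min with
  | empty => simp
  | insert b T hmin ih =>
    have hmin' : ∀ x ∈ Finset.map e.toEmbedding T, e.toEmbedding b < x := by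
      intro x hx
      obtain ⟨c, hc, rfl⟩ := Finset.mem_map.mp hx
      exact e.strictMono (hmin c hc)
    rw [Finset.map_insert, lprod_insert_min _ hmin', lprod_insert_min _ hmin, ih]
    rfl

def inlO : Fin m ↪o LSum m :=
  OrderEmbedding.ofStrictMono inlE (fun a b h => inlE_lt_inlE.mpr h)

def inrO : Fin m ↪o LSum m :=
  OrderEmbedding.ofStrictMono inrE (fun a b h => inrE_lt_inrE.mpr h)

lemma lprod_eKX {R : Type*} [Monoid R] (y : LSum m → R) (K Ξ : Finset (Fin m)) :
    lprod y (eKX K Ξ) = lprod (fun a => y (inlE a)) K * lprod (fun b => y (inrE b)) Ξ := by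
  induction K using Finset.induction_on_min with
  | empty =>
    have h0 : eKX (∅ : Finset (Fin m)) Ξ = Ξ.map (⟨inrE, inrE_injective⟩ : Fin m ↪ LSum m) := by
      simp [eKX]
    rw [h0]
    simp only [lprod_empty, one_mul]
    exact lprod_map inrO y Ξ
  | insert b T hmin ih =>
    have h1 : eKX (insert b T) Ξ = insert (inlE b) (eKX T Ξ) := by
      ext t
      simp only [mem_eKX, Finset.mem_insert]
      constructor
      · rintro (⟨a, ha, rfl⟩ | ⟨c, hc, rfl⟩)
        · rcases ha with rfl | haT
          · exact Or.inl rfl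
          · exact Or.inr (Or.inl ⟨a, haT, rfl⟩)
        · exact Or.inr (Or.inr ⟨c, hc, rfl⟩)
      · rintro (rfl | (⟨a, haT, rfl⟩ | ⟨c, hc, rfl⟩))
        · exact Or.inl ⟨b, Or.inl rfl, rfl⟩
        · exact Or.inl ⟨a, Or.inr haT, rfl⟩
        · exact Or.inr ⟨c, hc, rfl⟩
    have h2 : ∀ x ∈ eKX T Ξ, inlE b < x := by
      intro x hx
      rcases mem_eKX.mp hx with ⟨a, ha, rfl⟩ | ⟨c, hc, rfl⟩
      · exact inlE_lt_inlE.mpr (hmin a ha)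
      · exact inlE_lt_inrE b c
    rw [h1, lprod_insert_min _ h2, ih, lprod_insert_min _ hmin, mul_assoc]

lemma symm_inl_coe {p q : ℕ} {x : Fin (p + q)} {l : Fin p}
    (h : finSumFinEquiv.symm x = Sum.inl l) : (x : ℕ) = (l : ℕ) := by
  have h2 := congrArg finSumFinEquiv h
  rw [Equiv.apply_symm_apply, finSumFinEquiv_apply_left] at h2
  rw [h2]
  simp

lemma symm_inr_coe {p q : ℕ} {x : Fin (p + q)} {w : Fin q}
    (h : finSumFinEquiv.symm x = Sum.inr w) : (x : ℕ) = p + (w : ℕ) := by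
  have h2 := congrArg finSumFinEquiv h
  rw [Equiv.apply_symm_apply, finSumFinEquiv_apply_right] at h2
  rw [h2]
  simp

lemma orderEmbOfFin_eKX (K Ξ : Finset (Fin m)) (c : Fin (K.card + Ξ.card)) :
    (eKX K Ξ).orderEmbOfFin (card_eKX K Ξ) c
      = Sum.elim (fun l => inlE (K.orderEmbOfFin rfl l)) (fun w => inrE (Ξ.orderEmbOfFin rfl w))
          (finSumFinEquiv.symm c) := by
  have hmem : ∀ x : Fin (K.card + Ξ.card),
      Sum.elim (fun l => inlE (K.orderEmbOfFin rfl l)) (fun w => inrE (Ξ.orderEmbOfFin rfl w))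
        (finSumFinEquiv.symm x) ∈ eKX K Ξ := by
    intro x
    rcases finSumFinEquiv.symm x with l | w
    · exact mem_eKX.mpr (Or.inl ⟨_, Finset.orderEmbOfFin_mem K rfl l, rfl⟩)
    · exact mem_eKX.mpr (Or.inr ⟨_, Finset.orderEmbOfFin_mem Ξ rfl w, rfl⟩)
  have hmono : StrictMono (fun x : Fin (K.card + Ξ.card) =>
      Sum.elim (fun l => inlE (K.orderEmbOfFin rfl l)) (fun w => inrE (Ξ.orderEmbOfFin rfl w))
        (finSumFinEquiv.symm x)) := by
    intro x y hxy
    have hxy' : (x : ℕ) < (y : ℕ) := hxy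
    dsimp only
    rcases h1 : finSumFinEquiv.symm x with l1 | w1 <;>
      rcases h2 : finSumFinEquiv.symm y with l2 | w2
    · simp only [Sum.elim_inl]
      refine inlE_lt_inlE.mpr ((K.orderEmbOfFin rfl).strictMono ?_)
      have hx := symm_inl_coe h1
      have hy := symm_inl_coe h2
      exact Fin.lt_def.mpr (by omega)
    · simp only [Sum.elim_inl, Sum.elim_inr]
      exact inlE_lt_inrE _ _
    · exfalso
      have hx := symm_inr_coe h1
      have hy := symm_inl_coe h2
      have hl2 : (l2 : ℕ) < K.card := l2.2
      omega
    · simp only [Sum.elim_inr]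
      refine inrE_lt_inrE.mpr ((Ξ.orderEmbOfFin rfl).strictMono ?_)
      have hx := symm_inr_coe h1
      have hy := symm_inr_coe h2
      exact Fin.lt_def.mpr (by omega)
  exact (congrFun (Finset.orderEmbOfFin_unique (card_eKX K Ξ) hmem hmono) c).symm

end split

section cdet
variable {m : ℕ}

/-- combined coefficient matrix -/
def Mc (A B : Matrix (Fin m) (Fin m) ℂ) : Fin m → LSum m → ℂ :=
  fun i t => Sum.elim (A i) (B i) (ofLex t)

lemma concatDet_eq_ldet (A B : Matrix (Fin m) (Fin m) ℂ) (I K Ξ : Finset (Fin m)) :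
    concatDet A B I K Ξ = ldet (Mc A B) (I.sort (· ≤ ·)) (eKX K Ξ) := by
  have hL : (I.sort (· ≤ ·)).length = I.card := Finset.length_sort _
  by_cases h : K.card + Ξ.card = I.card
  · have h' : (eKX K Ξ).card = (I.sort (· ≤ ·)).length := by rw [card_eKX, hL, h]
    rw [concatDet, dif_pos h, ldet, dif_pos h']
    have hcast : (I.sort (· ≤ ·)).length = K.card + Ξ.card := by rw [hL, ← h]
    rw [← Matrix.det_submatrix_equiv_self (finCongr hL)]
    congr 1
    ext r c
    simp only [Matrix.submatrix_apply, Matrix.of_apply]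
    have hrow : ((I.orderIsoOfFin rfl (finCongr hL r) : Fin m)) = (I.sort (· ≤ ·)).get r := by
      rw [Finset.coe_orderIsoOfFin_apply, Finset.orderEmbOfFin_apply]
      simp
    have hcol : (eKX K Ξ).orderEmbOfFin h' c
        = Sum.elim (fun l => inlE (K.orderEmbOfFin rfl l))
            (fun w => inrE (Ξ.orderEmbOfFin rfl w))
            (finSumFinEquiv.symm (Fin.cast hcast c)) := by
      rw [← orderEmbOfFin_eKX K Ξ (Fin.cast hcast c)]
      have := @Finset.orderEmbOfFin_eq_orderEmbOfFin_iff _ _ _ _ (eKX K Ξ) c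
        (Fin.cast hcast c) h' (card_eKX K Ξ)
      exact this.mpr rfl
    have hcc : Fin.cast h.symm (finCongr hL c) = Fin.cast hcast c := rfl
    rw [hrow, hcc, hcol]
    rcases finSumFinEquiv.symm (Fin.cast hcast c) with l | w
    · rfl
    · rfl
  · rw [concatDet, dif_neg h, ldet, dif_neg (by rw [card_eKX, hL]; exact h)]

end cdet

section ops2
variable {m : ℕ}
variable (f : Fin m → Mat m)
variable (hff : ∀ i j : Fin m, f i * f j + f j * f i = 0)
variable (hffd : ∀ i j : Fin m, f i * (f j)ᴴ + (f j)ᴴ * f i = if i = j then 1 else 0)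

/-- combined generator family -/
def yop : LSum m → Mat2 m := fun t => Sum.elim (aOp f) (bOp f) (ofLex t)

include hff hffd in
lemma yop_anti : ∀ s t : LSum m, yop f s * yop f t = -(yop f t * yop f s) := by
  intro s t
  rcases s with s' | s' <;> rcases t with t' | t'
  · exact aOp_anti f hff hffd s' t'
  · exact ab_anti f hff hffd s' t'
  · exact ba_anti f hff hffd s' t'
  · exact bOp_anti f hff hffd s' t'

include hff hffd in
lemma lprod_yop_eKX (K Ξ : Finset (Fin m)) :
    lprod (yop f) (eKX K Ξ)
      = ((oprod f K * (parity f) ^ Ξ.card) ⊗ₖ oprod f Ξ) := by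
  rw [lprod_eKX]
  have h1 : lprod (fun a => yop f (inlE a)) K = oprod (aOp f) K := rfl
  have h2 : lprod (fun b => yop f (inrE b)) Ξ = oprod (bOp f) Ξ := rfl
  rw [h1, h2, oprod_aOp f K, oprod_bOp f hff hffd Ξ, ← Matrix.mul_kronecker_mul, one_mul]

lemma sum_Mc (A B : Matrix (Fin m) (Fin m) ℂ) (i : Fin m) :
    ∑ t : LSum m, Mc A B i t • yop f t
      = (∑ k, A i k • aOp f k) + (∑ k, B i k • bOp f k) := by
  rw [← Fintype.sum_equiv (toLex : (Fin m ⊕ Fin m) ≃ LSum m)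
    (fun s => Mc A B i (toLex s) • yop f (toLex s)) (fun t => Mc A B i t • yop f t)
    (fun s => rfl)]
  rw [Fintype.sum_sum_type]
  rfl

/-- conjugating an ordered product with a unitary -/
lemma oprod_conj (U : Mat2 m) (hU1 : Uᴴ * U = 1) (hU2 : U * Uᴴ = 1)
    (x : Fin m → Mat2 m) (S : Finset (Fin m)) :
    Uᴴ * oprod x S * U = oprod (fun i => Uᴴ * x i * U) S := by
  rw [oprod_eq_lprod, oprod_eq_lprod]
  induction S using Finset.induction_on_min with
  | empty => simpa using hU1
  | insert b T hmin ih =>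
    rw [lprod_insert_min _ hmin, lprod_insert_min _ hmin, ← ih]
    rw [show Uᴴ * (x b * lprod x T) * U = Uᴴ * x b * (U * Uᴴ) * lprod x T * U by
      rw [hU2]; simp only [mul_assoc, one_mul]]
    simp only [mul_assoc]

include hff hffd in
lemma term_eval (σ : Mat m) (K Ξ L Ω : Finset (Fin m)) :
    ptrace2 (((1 : Mat m) ⊗ₖ σ)
        * ((lprod (yop f) (eKX K Ξ))ᴴ * lprod (yop f) (eKX L Ω)))
      = Matrix.trace (σ * (oprod f Ξ)ᴴ * oprod f Ω) •
          ((parity f) ^ Ξ.card * ((oprod f K)ᴴ * oprod f L) * (parity f) ^ Ω.card) := by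
  rw [lprod_yop_eKX f hff hffd K Ξ, lprod_yop_eKX f hff hffd L Ω, kron_conjTranspose]
  rw [← Matrix.mul_kronecker_mul, ← Matrix.mul_kronecker_mul, one_mul]
  rw [ptrace2_kron]
  congr 1
  · rw [← mul_assoc, Matrix.trace_mul_comm, ← mul_assoc]
  · rw [Matrix.conjTranspose_mul, Matrix.conjTranspose_pow, parity_herm f hff hffd]
    simp only [mul_assoc]

end ops2

/-- Theorem 1: for even environment states, the Heisenberg action of the channel on
normally ordered monomials is a combination of normally ordered monomials of the same
or lower order. -/
theorem PhiStar_on_monomials_even_sigma (f : Fin m → Mat m)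
    (hff : ∀ i j : Fin m, f i * f j + f j * f i = 0)
    (hffd : ∀ i j : Fin m, f i * (f j)ᴴ + (f j)ᴴ * f i = if i = j then 1 else 0)
    (σ : Mat m) (hσherm : σᴴ = σ) (hσpos : σ.PosSemidef)
    (hσeven : parity f * σ = σ * parity f)
    (A B : Matrix (Fin m) (Fin m) ℂ) (hAB : A * Aᴴ + B * Bᴴ = 1)
    (U : Mat2 m) (hU1 : Uᴴ * U = 1) (hU2 : U * Uᴴ = 1)
    (hUact : ∀ i : Fin m,
      Uᴴ * aOp f i * U = (∑ k, A i k • aOp f k) + (∑ k, B i k • bOp f k))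
    (I J : Finset (Fin m)) :
    PhiStar U σ ((oprod f J)ᴴ * oprod f I)
      =
    ∑ K : Finset (Fin m), ∑ L : Finset (Fin m), ∑ Ξ : Finset (Fin m), ∑ Ω : Finset (Fin m),
      if K.card + Ξ.card = J.card ∧ L.card + Ω.card = I.card ∧ (Ξ.card + Ω.card) % 2 = 0 then
        ((-1 : ℂ) ^ (Ξ.card * (K.card + L.card))
            * (starRingEnd ℂ) (concatDet A B J K Ξ)
            * Gam f σ Ξ Ω
            * concatDet A B I L Ω)
          • ((oprod f K)ᴴ * oprod f L)
      else 0 := by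
  classical
  set c : Fin m → Mat2 m := fun i => Uᴴ * aOp f i * U with hc
  have hcM : c = fun i => ∑ t : LSum m, Mc A B i t • yop f t := by
    funext i
    exact (hUact i).trans (sum_Mc f A B i).symm
  have ins : ∀ Y Z : Mat2 m, (Uᴴ * Y * U) * (Uᴴ * Z * U) = Uᴴ * (Y * Z) * U := by
    intro Y Z
    rw [show (Uᴴ * Y * U) * (Uᴴ * Z * U) = Uᴴ * Y * (U * Uᴴ) * (Z * U) by
      simp only [mul_assoc]]
    rw [hU2, mul_one]
    simp only [mul_assoc]
  have hct : ∀ Y : Mat2 m, Uᴴ * Yᴴ * U = (Uᴴ * Y * U)ᴴ := by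
    intro Y
    simp only [Matrix.conjTranspose_mul, Matrix.conjTranspose_conjTranspose, mul_assoc]
  have hXkron : ((oprod f J)ᴴ * oprod f I) ⊗ₖ (1 : Mat m)
      = (oprod (aOp f) J)ᴴ * oprod (aOp f) I := by
    rw [oprod_aOp, oprod_aOp, kron_conjTranspose, Matrix.conjTranspose_one,
      ← Matrix.mul_kronecker_mul, one_mul]
  have hconj : Uᴴ * (((oprod f J)ᴴ * oprod f I) ⊗ₖ (1 : Mat m)) * U
      = (oprod c J)ᴴ * oprod c I := by
    rw [hXkron, ← ins ((oprod (aOp f) J)ᴴ) (oprod (aOp f) I), hct,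
      oprod_conj U hU1 hU2 _ J, oprod_conj U hU1 hU2 _ I]
  have hJexp : oprod c J
      = ∑ T : Finset (LSum m), ldet (Mc A B) (J.sort (· ≤ ·)) T • lprod (yop f) T := by
    rw [oprod_eq_lprod, hcM]
    exact master_list (yop f) (yop_anti f hff hffd) (Mc A B) (J.sort (· ≤ ·))
  have hIexp : oprod c I
      = ∑ T : Finset (LSum m), ldet (Mc A B) (I.sort (· ≤ ·)) T • lprod (yop f) T := by
    rw [oprod_eq_lprod, hcM]
    exact master_list (yop f) (yop_anti f hff hffd) (Mc A B) (I.sort (· ≤ ·))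
  have key : PhiStar U σ ((oprod f J)ᴴ * oprod f I)
      = ∑ TJ : Finset (LSum m), ∑ TI : Finset (LSum m),
          (star (ldet (Mc A B) (J.sort (· ≤ ·)) TJ) * ldet (Mc A B) (I.sort (· ≤ ·)) TI)
            • ptrace2 (((1 : Mat m) ⊗ₖ σ) * ((lprod (yop f) TJ)ᴴ * lprod (yop f) TI)) := by
    rw [PhiStar]
    rw [show ((1 : Mat m) ⊗ₖ σ) * Uᴴ * (((oprod f J)ᴴ * oprod f I) ⊗ₖ (1 : Mat m)) * U
        = ((1 : Mat m) ⊗ₖ σ) * (Uᴴ * (((oprod f J)ᴴ * oprod f I) ⊗ₖ (1 : Mat m)) * U) by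
      simp only [mul_assoc]]
    rw [hconj, hJexp, hIexp, Matrix.conjTranspose_sum]
    simp only [Matrix.conjTranspose_smul]
    rw [Finset.sum_mul_sum]
    rw [Finset.mul_sum, ptrace2_sum]
    refine Finset.sum_congr rfl fun TJ _ => ?_
    rw [Finset.mul_sum, ptrace2_sum]
    refine Finset.sum_congr rfl fun TI _ => ?_
    rw [smul_mul_smul_comm, Matrix.mul_smul, ptrace2_smul]
  rw [key, sum_finset_lsum]
  refine Finset.sum_congr rfl fun K _ => ?_
  rw [show (∑ Ξ : Finset (Fin m),
        ∑ TI : Finset (LSum m),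
          (star (ldet (Mc A B) (J.sort (· ≤ ·)) (eKX K Ξ)) * ldet (Mc A B) (I.sort (· ≤ ·)) TI)
            • ptrace2 (((1 : Mat m) ⊗ₖ σ) * ((lprod (yop f) (eKX K Ξ))ᴴ * lprod (yop f) TI)))
      = ∑ Ξ : Finset (Fin m), ∑ L : Finset (Fin m), ∑ Ω : Finset (Fin m),
          (star (ldet (Mc A B) (J.sort (· ≤ ·)) (eKX K Ξ))
              * ldet (Mc A B) (I.sort (· ≤ ·)) (eKX L Ω))
            • ptrace2 (((1 : Mat m) ⊗ₖ σ)
                * ((lprod (yop f) (eKX K Ξ))ᴴ * lprod (yop f) (eKX L Ω))) from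
    Finset.sum_congr rfl fun Ξ _ => sum_finset_lsum _]
  rw [Finset.sum_comm]
  refine Finset.sum_congr rfl fun L _ => ?_
  refine Finset.sum_congr rfl fun Ξ _ => ?_
  refine Finset.sum_congr rfl fun Ω _ => ?_
  -- per-term identity
  rw [← concatDet_eq_ldet A B J K Ξ, ← concatDet_eq_ldet A B I L Ω,
    term_eval f hff hffd σ K Ξ L Ω]
  by_cases hKJ : K.card + Ξ.card = J.card
  · by_cases hLI : L.card + Ω.card = I.card
    · by_cases hpar : (Ξ.card + Ω.card) % 2 = 0
      · rw [if_pos ⟨hKJ, hLI, hpar⟩]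
        have hPZ : parity f * ((oprod f K)ᴴ * oprod f L)
            = ((-1:ℂ) ^ (K.card + L.card)) • (((oprod f K)ᴴ * oprod f L) * parity f) := by
          rw [← mul_assoc, parity_oprod_d f hff hffd K, Matrix.smul_mul, mul_assoc,
            parity_oprod f hff hffd L, Matrix.mul_smul, smul_smul, ← pow_add, mul_assoc]
        have hmove : parity f ^ Ξ.card * ((oprod f K)ᴴ * oprod f L) * parity f ^ Ω.card
            = ((-1:ℂ) ^ (Ξ.card * (K.card + L.card))) • ((oprod f K)ᴴ * oprod f L) := by
          rw [parity_pow_mul f _ _ _ hPZ, Matrix.smul_mul, mul_assoc, ← pow_add,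
            parity_pow_even f hff hffd _ hpar, mul_one]
        rw [hmove, smul_smul, smul_smul]
        congr 1
        rw [Gam, starRingEnd_apply]
        ring
      · rw [if_neg (by tauto)]
        have hodd : (Ξ.card + Ω.card) % 2 = 1 := by omega
        rw [gam_odd_vanish f hff hffd σ hσeven Ξ Ω hodd, zero_smul, smul_zero]
    · rw [if_neg (by tauto)]
      have h0 : concatDet A B I L Ω = 0 := dif_neg hLI
      rw [h0, mul_zero, zero_smul]
  · rw [if_neg (by tauto)]
    have h0 : concatDet A B J K Ξ = 0 := dif_neg hKJ
    rw [h0, star_zero, zero_mul, zero_smul]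

end
end

section
/- Assume in addition that σ is a vacuum state: σᴴ = σ, f_j σ = 0 for all j ∈ Fin m, and Tr σ = 1. Then for all finsets I, J ⊆ Fin m, Φ*(f_J† f_I) = Σ conj(det(A_{J×K})) · det(A_{I×L}) · f_K† f_L, where the sum runs over all finsets K, L ⊆ Fin m with |K| = |J| and |L| = |I|. -/
open Matrix Finset Kronecker ComplexConjugate
open scoped ComplexOrder

noncomputable section

variable {m : ℕ}

/-- The minor `det(A_{I×L})` with rows from `I` and columns from `L`, each in increasing
order (defined to be `0` if `|L| ≠ |I|`). -/
def subDet {m : ℕ} (A : Matrix (Fin m) (Fin m) ℂ) (I L : Finset (Fin m)) : ℂ :=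
  if h : L.card = I.card then
    Matrix.det (Matrix.of fun r c : Fin I.card =>
      A (I.orderIsoOfFin rfl r) (L.orderIsoOfFin h c))
  else 0

namespace PVaux

/-! ### Generic list lemmas -/

lemma prod_ofFn_sum {n : ℕ} {R : Type*} [Ring R] [Algebra ℂ R] {α : Type*} [Fintype α]
    [DecidableEq α] (h : Fin n → α → R) :
    (List.ofFn fun r => ∑ x, h r x).prod = ∑ κ : Fin n → α, (List.ofFn fun r => h r (κ r)).prod := by
  have := MultilinearMap.map_sum (MultilinearMap.mkPiAlgebraFin ℂ n R) (α := fun _ => α)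
    (g := fun r x => h r x)
  simpa [MultilinearMap.mkPiAlgebraFin_apply] using this

lemma prod_ofFn_smul {n : ℕ} {R : Type*} [Ring R] [Algebra ℂ R] (c : Fin n → ℂ) (x : Fin n → R) :
    (List.ofFn fun r => c r • x r).prod = (∏ r, c r) • (List.ofFn x).prod := by
  induction n with
  | zero => simp
  | succ k ih =>
    rw [List.ofFn_succ, List.ofFn_succ, List.prod_cons, List.prod_cons,
      ih (fun i => c i.succ) (fun i => x i.succ), Fin.prod_univ_succ, smul_mul_assoc,
      mul_smul_comm, smul_smul]

lemma list_prod_kron {ι : Type*} (u w : ι → Mat m) (l : List ι) :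
    (l.map fun x => u x ⊗ₖ w x).prod = (l.map u).prod ⊗ₖ (l.map w).prod := by
  induction l with
  | nil => simp [Matrix.one_kronecker_one]
  | cons a t ih => simp [ih, Matrix.mul_kronecker_mul]

lemma kron_conjTranspose (X M : Mat m) : (X ⊗ₖ M)ᴴ = Xᴴ ⊗ₖ Mᴴ := by
  ext ⟨i, s⟩ ⟨j, t⟩
  simp [Matrix.conjTranspose_apply, Matrix.kroneckerMap_apply, star_mul', mul_comm]

lemma sort_map_eq_ofFn {k : ℕ} (I : Finset (Fin m)) (h : I.card = k) {S : Type*} (g : Fin m → S) :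
    (I.sort (· ≤ ·)).map g = List.ofFn (fun r : Fin k => g (I.orderEmbOfFin h r)) := by
  apply List.ext_getElem
  · simp [h]
  · intro i h1 h2
    simp [Finset.orderEmbOfFin_apply]

/-! ### Partial trace lemmas -/

def tauL (σ : Mat m) : Mat2 m →ₗ[ℂ] Mat m where
  toFun X := ptrace2 (((1 : Mat m) ⊗ₖ σ) * X)
  map_add' X Y := by
    ext i j
    simp [ptrace2, Matrix.mul_add, Matrix.add_apply, Finset.sum_add_distrib]
  map_smul' c X := by
    ext i j
    simp [ptrace2, Matrix.mul_smul, Matrix.smul_apply, Finset.mul_sum]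

lemma ptrace2_kron (X M : Mat m) : ptrace2 (X ⊗ₖ M) = M.trace • X := by
  ext i j
  simp [ptrace2, Matrix.kroneckerMap_apply, Matrix.trace, Matrix.diag, mul_comm, Finset.mul_sum]

lemma tauL_kron (σ X Y : Mat m) : tauL σ (X ⊗ₖ Y) = (σ * Y).trace • X := by
  show ptrace2 _ = _
  rw [show ((1 : Mat m) ⊗ₖ σ) * (X ⊗ₖ Y) = (1 * X) ⊗ₖ (σ * Y) from
    (Matrix.mul_kronecker_mul _ _ _ _).symm, Matrix.one_mul, ptrace2_kron]

/-! ### Conjugation by a unitary -/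

def conjU (U : Mat2 m) (hU1 : Uᴴ * U = 1) (hU2 : U * Uᴴ = 1) : Mat2 m →* Mat2 m where
  toFun X := Uᴴ * X * U
  map_one' := by show Uᴴ * 1 * U = 1; rw [Matrix.mul_one, hU1]
  map_mul' X Y := by
    have h : U * (Uᴴ * (Y * U)) = Y * U := by
      rw [← Matrix.mul_assoc, hU2, Matrix.one_mul]
    simp only [Matrix.mul_assoc, h]

lemma conjU_conjTranspose (U : Mat2 m) (hU1 : Uᴴ * U = 1) (hU2 : U * Uᴴ = 1) (X : Mat2 m) :
    conjU U hU1 hU2 (Xᴴ) = (conjU U hU1 hU2 X)ᴴ := by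
  show Uᴴ * Xᴴ * U = (Uᴴ * X * U)ᴴ
  simp [Matrix.conjTranspose_mul, Matrix.mul_assoc]

/-! ### Vacuum lemmas -/

section vac
variable (f : Fin m → Mat m) (σ : Mat m)

/-- second tensor components of `a`/`b` ops -/
def ww : Fin m ⊕ Fin m → Mat m := Sum.elim (fun _ => (1 : Mat m)) f

lemma wprod_one (l : List (Fin m ⊕ Fin m)) (h : ∀ x ∈ l, x.isLeft) :
    (l.map (ww f)).prod = 1 := by
  induction l with
  | nil => simp
  | cons a t ih =>
    have ha := h a List.mem_cons_self
    obtain ⟨y, rfl⟩ := Sum.isLeft_iff.mp ha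
    rw [List.map_cons, List.prod_cons, ih fun x hx => h x (List.mem_cons_of_mem _ hx)]
    simp [ww]

lemma wprod_vac (hσvac : ∀ j : Fin m, f j * σ = 0)
    (l : List (Fin m ⊕ Fin m)) (h : ∃ x ∈ l, x.isRight) :
    (l.map (ww f)).prod * σ = 0 := by
  induction l with
  | nil => simp at h
  | cons a t ih =>
    rw [List.map_cons, List.prod_cons, Matrix.mul_assoc]
    by_cases ht : ∃ x ∈ t, x.isRight
    · rw [ih ht, Matrix.mul_zero]
    · have htl : ∀ x ∈ t, x.isLeft := by
        intro x hx
        rcases x with y | y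
        · simp
        · exact absurd ⟨Sum.inr y, hx, rfl⟩ ht
      obtain ⟨x, hx, hxr⟩ := h
      rcases List.mem_cons.mp hx with rfl | hxt
      · obtain ⟨y, rfl⟩ := Sum.isRight_iff.mp hxr
        rw [wprod_one f t htl, Matrix.one_mul]
        simpa [ww] using hσvac y
      · exact absurd (htl x hxt) (by simp [Sum.not_isLeft.mpr hxr])

end vac

section kill

variable (f : Fin m → Mat m) (σ : Mat m)

/-- first tensor components of `a`/`b` ops -/
def uu : Fin m ⊕ Fin m → Mat m := Sum.elim f (fun _ => parity f)

/-- the combined family of `a` and `b` ops -/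
def dd : Fin m ⊕ Fin m → Mat2 m := Sum.elim (aOp f) (bOp f)

lemma dd_eq (x : Fin m ⊕ Fin m) : dd f x = uu f x ⊗ₖ ww f x := by
  cases x <;> rfl

lemma Dprod_kron {n : ℕ} (kap : Fin n → Fin m ⊕ Fin m) :
    (List.ofFn (dd f ∘ kap)).prod
      = (List.ofFn (uu f ∘ kap)).prod ⊗ₖ (List.ofFn (ww f ∘ kap)).prod := by
  rw [List.ofFn_eq_map, List.ofFn_eq_map, List.ofFn_eq_map]
  rw [show (List.finRange n).map (dd f ∘ kap)
      = (List.finRange n).map (fun r => (uu f ∘ kap) r ⊗ₖ (ww f ∘ kap) r) from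
    List.map_congr_left fun r _ => dd_eq f (kap r)]
  exact list_prod_kron _ _ _

lemma tau_core {p q : ℕ} (kap : Fin q → Fin m ⊕ Fin m) (lam : Fin p → Fin m ⊕ Fin m) :
    tauL σ (((List.ofFn (dd f ∘ kap)).prod)ᴴ * (List.ofFn (dd f ∘ lam)).prod)
      = (σ * (((List.ofFn (ww f ∘ kap)).prod)ᴴ * (List.ofFn (ww f ∘ lam)).prod)).trace •
        (((List.ofFn (uu f ∘ kap)).prod)ᴴ * (List.ofFn (uu f ∘ lam)).prod) := by
  rw [Dprod_kron, Dprod_kron, kron_conjTranspose, ← Matrix.mul_kronecker_mul, tauL_kron]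

lemma tau_kill_right (hσvac : ∀ j : Fin m, f j * σ = 0) {p q : ℕ}
    (kap : Fin q → Fin m ⊕ Fin m) (lam : Fin p → Fin m ⊕ Fin m) (h : ∃ r, (lam r).isRight) :
    tauL σ (((List.ofFn (dd f ∘ kap)).prod)ᴴ * (List.ofFn (dd f ∘ lam)).prod) = 0 := by
  rw [tau_core]
  obtain ⟨r, hr⟩ := h
  have hzero : (List.ofFn (ww f ∘ lam)).prod * σ = 0 := by
    have := wprod_vac f σ hσvac ((List.finRange p).map lam)
      ⟨lam r, List.mem_map_of_mem (List.mem_finRange r), hr⟩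
    rwa [List.map_map, ← List.ofFn_eq_map] at this
  rw [← Matrix.mul_assoc, Matrix.trace_mul_comm, ← Matrix.mul_assoc, hzero,
    Matrix.zero_mul, Matrix.trace_zero, zero_smul]

lemma tau_kill_left (hσherm : σᴴ = σ) (hσvac : ∀ j : Fin m, f j * σ = 0) {p q : ℕ}
    (kap : Fin q → Fin m ⊕ Fin m) (lam' : Fin p → Fin m) (h : ∃ r, (kap r).isRight) :
    tauL σ (((List.ofFn (dd f ∘ kap)).prod)ᴴ *
      (List.ofFn (dd f ∘ (Sum.inl ∘ lam'))).prod) = 0 := by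
  rw [tau_core]
  have hone : (List.ofFn (ww f ∘ (Sum.inl ∘ lam'))).prod = 1 := by
    have := wprod_one f ((List.finRange p).map (Sum.inl ∘ lam')) (by simp)
    rwa [List.map_map, ← List.ofFn_eq_map] at this
  have hzero : (List.ofFn (ww f ∘ kap)).prod * σ = 0 := by
    obtain ⟨r, hr⟩ := h
    have := wprod_vac f σ hσvac ((List.finRange q).map kap)
      ⟨kap r, List.mem_map_of_mem (List.mem_finRange r), hr⟩
    rwa [List.map_map, ← List.ofFn_eq_map] at this
  have hconj : σ * ((List.ofFn (ww f ∘ kap)).prod)ᴴ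
      = ((List.ofFn (ww f ∘ kap)).prod * σ)ᴴ := by
    rw [Matrix.conjTranspose_mul, hσherm]
  rw [hone, Matrix.mul_one, hconj, hzero, Matrix.conjTranspose_zero, Matrix.trace_zero, zero_smul]

lemma tau_collapse (hσtr : Matrix.trace σ = 1) {p q : ℕ}
    (kap' : Fin q → Fin m) (lam' : Fin p → Fin m) :
    tauL σ (((List.ofFn (dd f ∘ (Sum.inl ∘ kap'))).prod)ᴴ *
      (List.ofFn (dd f ∘ (Sum.inl ∘ lam'))).prod)
    = ((List.ofFn (f ∘ kap')).prod)ᴴ * (List.ofFn (f ∘ lam')).prod := by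
  rw [tau_core]
  have honeK : (List.ofFn (ww f ∘ (Sum.inl ∘ kap'))).prod = 1 := by
    have := wprod_one f ((List.finRange q).map (Sum.inl ∘ kap')) (by simp)
    rwa [List.map_map, ← List.ofFn_eq_map] at this
  have honeL : (List.ofFn (ww f ∘ (Sum.inl ∘ lam'))).prod = 1 := by
    have := wprod_one f ((List.finRange p).map (Sum.inl ∘ lam')) (by simp)
    rwa [List.map_map, ← List.ofFn_eq_map] at this
  have huK : uu f ∘ (Sum.inl ∘ kap') = f ∘ kap' := rfl
  have huL : uu f ∘ (Sum.inl ∘ lam') = f ∘ lam' := rfl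
  rw [honeK, honeL, huK, huL, Matrix.conjTranspose_one, Matrix.one_mul, Matrix.mul_one,
    hσtr, one_smul]

end kill

/-! ### Reducing a sum over `Fin m ⊕ Fin m`-valued functions to `inl` ones -/

lemma sum_reduce {n : ℕ} {β : Type*} [AddCommMonoid β] (t : (Fin n → Fin m ⊕ Fin m) → β)
    (h0 : ∀ kap, (∃ r, (kap r).isRight) → t kap = 0) :
    ∑ kap, t kap = ∑ kap' : Fin n → Fin m, t (Sum.inl ∘ kap') := by
  classical
  have hinj : Function.Injective
      (fun kap' : Fin n → Fin m => (Sum.inl ∘ kap' : Fin n → Fin m ⊕ Fin m)) := by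
    intro x y hxy
    funext r
    exact Sum.inl.inj (congrFun hxy r)
  have himage : ∑ kap' : Fin n → Fin m, t (Sum.inl ∘ kap')
      = ∑ kap ∈ Finset.univ.image
          (fun kap' : Fin n → Fin m => (Sum.inl ∘ kap' : Fin n → Fin m ⊕ Fin m)), t kap :=
    (Finset.sum_image (fun x _ y _ hxy => hinj hxy)).symm
  rw [himage]
  symm
  apply Finset.sum_subset (Finset.subset_univ _)
  intro kap _ hkap
  apply h0
  by_contra hno
  push_neg at hno
  apply hkap
  rw [Finset.mem_image]
  refine ⟨fun r => (kap r).getLeft ?_, Finset.mem_univ _, ?_⟩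
  · rcases hh : kap r with y | y
    · rfl
    · exact (hno r (by rw [hh]; rfl)).elim
  · funext r
    simp

/-! ### Determinant expansion -/

variable {R : Type*} [Ring R] [Algebra ℂ R]

def phiF (f : Fin m → R) : (Fin m → ℂ) →ₗ[ℂ] R where
  toFun v := ∑ k, v k • f k
  map_add' u v := by simp [add_smul, Finset.sum_add_distrib]
  map_smul' c v := by simp [smul_smul, Finset.smul_sum]

lemma phiF_sq (f : Fin m → R) (hf : ∀ i j, f i * f j = -(f j * f i)) (v : Fin m → ℂ) :
    phiF f v * phiF f v = 0 := by
  have h : phiF f v * phiF f v = ∑ k, ∑ l, (v k * v l) • (f k * f l) := by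
    simp only [phiF, LinearMap.coe_mk, AddHom.coe_mk, Finset.sum_mul_sum]
    refine Finset.sum_congr rfl fun k _ => Finset.sum_congr rfl fun l _ => ?_
    rw [smul_mul_assoc, mul_smul_comm, smul_smul]
  have h2 : phiF f v * phiF f v = -(phiF f v * phiF f v) := by
    calc phiF f v * phiF f v = ∑ k, ∑ l, (v k * v l) • (f k * f l) := h
      _ = ∑ k, ∑ l, -((v k * v l) • (f l * f k)) := by
          refine Finset.sum_congr rfl fun k _ => Finset.sum_congr rfl fun l _ => ?_
          rw [hf k l, smul_neg]
      _ = -∑ l, ∑ k, ((v k * v l) • (f l * f k)) := by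
          rw [← Finset.sum_comm]
          simp
      _ = -(phiF f v * phiF f v) := by
          rw [h]
          congr 1
          refine Finset.sum_congr rfl fun k _ => Finset.sum_congr rfl fun l _ => ?_
          rw [mul_comm]
  have h3 : (2:ℂ) • (phiF f v * phiF f v) = 0 := by
    rw [two_smul]
    nth_rewrite 1 [h2]
    exact neg_add_cancel _
  calc phiF f v * phiF f v = ((2:ℂ)⁻¹ * 2) • (phiF f v * phiF f v) := by norm_num
    _ = (2:ℂ)⁻¹ • ((2:ℂ) • (phiF f v * phiF f v)) := mul_smul _ _ _
    _ = 0 := by rw [h3, smul_zero]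

def Gmap (f : Fin m → R) (hf : ∀ i j, f i * f j = -(f j * f i)) (p : ℕ) :
    (Fin m → ℂ) [⋀^Fin p]→ₗ[ℂ] R :=
  ((ExteriorAlgebra.lift ℂ ⟨phiF f, phiF_sq f hf⟩).toLinearMap).compAlternatingMap
    (ExteriorAlgebra.ιMulti ℂ p)

lemma Gmap_apply (f : Fin m → R) (hf : ∀ i j, f i * f j = -(f j * f i)) (p : ℕ)
    (v : Fin p → (Fin m → ℂ)) :
    Gmap f hf p v = (List.ofFn fun r => phiF f (v r)).prod := by
  simp only [Gmap, LinearMap.compAlternatingMap_apply, ExteriorAlgebra.ιMulti_apply,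
    AlgHom.toLinearMap_apply, map_list_prod, List.map_ofFn]
  refine congrArg List.prod (congrArg List.ofFn (funext fun r => ?_))
  simp [Function.comp, ExteriorAlgebra.lift_ι_apply]

lemma phiF_single (f : Fin m → R) (j : Fin m) : phiF f (Pi.single j 1) = f j := by
  simp only [phiF, LinearMap.coe_mk, AddHom.coe_mk, Pi.single_apply, ite_smul, one_smul, zero_smul]
  simp

lemma Gmap_single (f : Fin m → R) (hf : ∀ i j, f i * f j = -(f j * f i)) {p : ℕ}
    (lam : Fin p → Fin m) :
    Gmap f hf p (fun r => Pi.single (lam r) 1) = (List.ofFn (f ∘ lam)).prod := by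
  rw [Gmap_apply]
  refine congrArg List.prod (congrArg List.ofFn (funext fun r => ?_))
  simp [phiF_single, Function.comp]

theorem detExpand (f : Fin m → R) (hf : ∀ i j, f i * f j = -(f j * f i))
    (A : Matrix (Fin m) (Fin m) ℂ) (I : Finset (Fin m)) :
    ∑ lam : Fin I.card → Fin m,
      (∏ r, A (I.orderEmbOfFin rfl r) (lam r)) • (List.ofFn (f ∘ lam)).prod
      = ∑ L : Finset (Fin m), subDet A I L • oprod f L := by
  classical
  set p := I.card with hp
  -- rewrite products as Gmap values
  have key : ∀ lam : Fin p → Fin m,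
      (List.ofFn (f ∘ lam)).prod = Gmap f hf p (fun r => Pi.single (lam r) 1) :=
    fun lam => (Gmap_single f hf lam).symm
  simp only [key]
  rw [← Finset.sum_filter_add_sum_filter_not Finset.univ (fun lam => Function.Injective lam)]
  have hzero : ∑ lam ∈ Finset.univ.filter (fun lam : Fin p → Fin m => ¬ Function.Injective lam),
      (∏ r, A (I.orderEmbOfFin rfl r) (lam r)) • Gmap f hf p (fun r => Pi.single (lam r) 1) = 0 := by
    refine Finset.sum_eq_zero fun lam hlam => ?_
    rw [Finset.mem_filter] at hlam
    have hni : ¬ Function.Injective (fun r => (Pi.single (lam r) 1 : Fin m → ℂ)) := by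
      intro hinj
      exact hlam.2 fun r s hrs => hinj (congrArg (fun x => (Pi.single x 1 : Fin m → ℂ)) hrs)
    rw [AlternatingMap.map_eq_zero_of_not_injective _ _ hni, smul_zero]
  rw [hzero, add_zero]
  -- bijection with (subsets of size p) × permutations
  have himg : ∀ x : {L : Finset (Fin m) // L.card = p} × Equiv.Perm (Fin p),
      Finset.univ.image ((x.1.1.orderEmbOfFin x.1.2) ∘ x.2) = x.1.1 := by
    rintro ⟨⟨L, hL⟩, π⟩
    apply Finset.coe_injective
    rw [Finset.coe_image, Finset.coe_univ, Set.image_univ, Set.range_comp,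
      Equiv.range_eq_univ, Set.image_univ, Finset.range_orderEmbOfFin]
  have hbij : ∑ x : {L : Finset (Fin m) // L.card = p} × Equiv.Perm (Fin p),
      (∏ r, A (I.orderEmbOfFin rfl r) (x.1.1.orderEmbOfFin x.1.2 (x.2 r))) •
        Gmap f hf p (fun r => Pi.single (x.1.1.orderEmbOfFin x.1.2 (x.2 r)) 1)
      = ∑ lam ∈ Finset.univ.filter (fun lam : Fin p → Fin m => Function.Injective lam),
        (∏ r, A (I.orderEmbOfFin rfl r) (lam r)) • Gmap f hf p (fun r => Pi.single (lam r) 1) := by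
    refine Finset.sum_bij (fun x _ => (x.1.1.orderEmbOfFin x.1.2) ∘ x.2) ?_ ?_ ?_ ?_
    · intro x _
      simp only [Finset.mem_filter, Finset.mem_univ, true_and]
      exact (x.1.1.orderEmbOfFin x.1.2).injective.comp x.2.injective
    · intro x1 hx1 x2 hx2 heq
      obtain ⟨⟨L₁, h₁⟩, π₁⟩ := x1
      obtain ⟨⟨L₂, h₂⟩, π₂⟩ := x2
      dsimp only at heq
      have hLL : L₁ = L₂ := by
        have e1 := himg ⟨⟨L₁, h₁⟩, π₁⟩
        have e2 := himg ⟨⟨L₂, h₂⟩, π₂⟩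
        simp only at e1 e2
        rw [← e1, ← e2, heq]
      subst hLL
      have hππ : π₁ = π₂ := by
        ext r
        have := (L₁.orderEmbOfFin h₁).injective (congrFun heq r)
        exact congrArg Fin.val this
      simp [hππ]
    · intro lam hlam
      rw [Finset.mem_filter] at hlam
      have hinj := hlam.2
      have hcard : (Finset.univ.image lam).card = p := by
        rw [Finset.card_image_of_injective _ hinj, Finset.card_univ, Fintype.card_fin]
      have hmem : ∀ r, lam r ∈ Finset.univ.image lam := by
        intro r; exact Finset.mem_image_of_mem lam (Finset.mem_univ r)
      set g : Fin p → Fin p :=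
        fun r => ((Finset.univ.image lam).orderIsoOfFin hcard).symm ⟨lam r, hmem r⟩ with hg
      have ginj : Function.Injective g := by
        intro r s hrs
        have := ((Finset.univ.image lam).orderIsoOfFin hcard).symm.injective hrs
        exact hinj (Subtype.ext_iff.mp this)
      refine ⟨⟨⟨Finset.univ.image lam, hcard⟩,
        Equiv.ofBijective g (Finite.injective_iff_bijective.mp ginj)⟩, Finset.mem_univ _, ?_⟩
      funext r
      show (Finset.univ.image lam).orderEmbOfFin hcard (g r) = lam r
      rw [hg, ← Finset.coe_orderIsoOfFin_apply, OrderIso.apply_symm_apply]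
    · intro x _
      rfl
  rw [← hbij]
  -- evaluate the inner sums as determinants
  have hinner : ∀ Ls : {L : Finset (Fin m) // L.card = p},
      ∑ π : Equiv.Perm (Fin p),
        (∏ r, A (I.orderEmbOfFin rfl r) (Ls.1.orderEmbOfFin Ls.2 (π r))) •
          Gmap f hf p (fun r => Pi.single (Ls.1.orderEmbOfFin Ls.2 (π r)) 1)
        = subDet A I Ls.1 • oprod f Ls.1 := by
    rintro ⟨L, hL⟩
    simp only
    have hGL : Gmap f hf p (fun r => Pi.single (L.orderEmbOfFin hL r) 1) = oprod f L := by
      have := Gmap_single f hf (fun r => L.orderEmbOfFin hL r)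
      rw [this, oprod, sort_map_eq_ofFn L hL f]
      rfl
    have hsign : ∀ (u : ℤˣ) (X : R), u • X = ((u : ℤ) : ℂ) • X := by
      intro u X
      rw [Units.smul_def, Int.cast_smul_eq_zsmul]
    have hLI : L.card = I.card := hL
    calc ∑ π : Equiv.Perm (Fin p),
        (∏ r, A (I.orderEmbOfFin rfl r) (L.orderEmbOfFin hL (π r))) •
          Gmap f hf p (fun r => Pi.single (L.orderEmbOfFin hL (π r)) 1)
        = ∑ π : Equiv.Perm (Fin p),
          ((((Equiv.Perm.sign π : ℤ) : ℂ)) * ∏ r, A (I.orderEmbOfFin rfl r) (L.orderEmbOfFin hL (π r))) •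
            Gmap f hf p (fun r => Pi.single (L.orderEmbOfFin hL r) 1) := by
          refine Finset.sum_congr rfl fun π _ => ?_
          have hp2 := AlternatingMap.map_perm (Gmap f hf p)
            (fun r => Pi.single (L.orderEmbOfFin hL r) (1:ℂ)) π
          have : (fun r => Pi.single (L.orderEmbOfFin hL (π r)) (1:ℂ))
              = (fun r => Pi.single (L.orderEmbOfFin hL r) (1:ℂ)) ∘ π := rfl
          rw [this, hp2, hsign, smul_smul, mul_comm]
      _ = (Matrix.det (Matrix.of fun c r : Fin p =>
            A (I.orderEmbOfFin rfl r) (L.orderEmbOfFin hL c))) •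
            Gmap f hf p (fun r => Pi.single (L.orderEmbOfFin hL r) 1) := by
          rw [← Finset.sum_smul, Matrix.det_apply']
          rfl
      _ = subDet A I L • oprod f L := by
          rw [hGL]
          congr 1
          rw [subDet, dif_pos hLI, ← Matrix.det_transpose]
          congr 1
  calc ∑ x : {L : Finset (Fin m) // L.card = p} × Equiv.Perm (Fin p),
      (∏ r, A (I.orderEmbOfFin rfl r) (x.1.1.orderEmbOfFin x.1.2 (x.2 r))) •
        Gmap f hf p (fun r => Pi.single (x.1.1.orderEmbOfFin x.1.2 (x.2 r)) 1)
      = ∑ Ls : {L : Finset (Fin m) // L.card = p}, subDet A I Ls.1 • oprod f Ls.1 := by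
        rw [Fintype.sum_prod_type]
        exact Finset.sum_congr rfl fun Ls _ => hinner Ls
    _ = ∑ L ∈ Finset.univ.filter (fun L : Finset (Fin m) => L.card = p),
          subDet A I L • oprod f L := by
        rw [Finset.sum_filter]
        rw [← Finset.sum_subtype (Finset.univ.filter (fun L : Finset (Fin m) => L.card = p))
          (by intro x; simp) (fun L => subDet A I L • oprod f L)]
        rw [Finset.sum_filter]
    _ = ∑ L : Finset (Fin m), subDet A I L • oprod f L := by
        rw [← Finset.sum_filter_add_sum_filter_not Finset.univ
          (fun L : Finset (Fin m) => L.card = p)]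
        have : ∑ L ∈ Finset.univ.filter (fun L : Finset (Fin m) => ¬ L.card = p),
            subDet A I L • oprod f L = 0 := by
          refine Finset.sum_eq_zero fun L hLf => ?_
          rw [Finset.mem_filter] at hLf
          rw [subDet, dif_neg hLf.2, zero_smul]
        rw [this, add_zero]

end PVaux

/-- For a vacuum environment state, the Heisenberg action of the channel on normally
ordered monomials is given by minors of `A` only. -/
theorem PhiStar_on_monomials_vacuum (f : Fin m → Mat m)
    (hff : ∀ i j : Fin m, f i * f j + f j * f i = 0)
    (hffd : ∀ i j : Fin m, f i * (f j)ᴴ + (f j)ᴴ * f i = if i = j then 1 else 0)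
    (σ : Mat m) (hσherm : σᴴ = σ)
    (hσvac : ∀ j : Fin m, f j * σ = 0) (hσtr : Matrix.trace σ = 1)
    (A B : Matrix (Fin m) (Fin m) ℂ) (hAB : A * Aᴴ + B * Bᴴ = 1)
    (U : Mat2 m) (hU1 : Uᴴ * U = 1) (hU2 : U * Uᴴ = 1)
    (hUact : ∀ i : Fin m,
      Uᴴ * aOp f i * U = (∑ k, A i k • aOp f k) + (∑ k, B i k • bOp f k))
    (I J : Finset (Fin m)) :
    PhiStar U σ ((oprod f J)ᴴ * oprod f I)
      =
    ∑ K : Finset (Fin m), ∑ L : Finset (Fin m),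
      if K.card = J.card ∧ L.card = I.card then
        ((starRingEnd ℂ) (subDet A J K) * subDet A I L) • ((oprod f K)ᴴ * oprod f L)
      else 0 := by
  classical
  have hf' : ∀ i j, f i * f j = -(f j * f i) := fun i j => eq_neg_of_add_eq_zero_left (hff i j)
  set c : Fin m → Mat2 m := fun i => Uᴴ * aOp f i * U with hcdef
  have hc : ∀ i, c i = ∑ x : Fin m ⊕ Fin m, Sum.elim (A i) (B i) x • PVaux.dd f x := by
    intro i
    have : c i = Uᴴ * aOp f i * U := rfl
    rw [this, hUact i, Fintype.sum_sum_type]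
    simp [PVaux.dd]
  -- `oprod` of the `a`-operators is a Kronecker product
  have opA : ∀ (S : Finset (Fin m)), oprod (aOp f) S = (oprod f S) ⊗ₖ (1 : Mat m) := by
    intro S
    rw [oprod, oprod]
    rw [show (S.sort (· ≤ ·)).map (aOp f)
        = (S.sort (· ≤ ·)).map (fun i => f i ⊗ₖ (1 : Mat m)) from rfl,
      PVaux.list_prod_kron f (fun _ => (1 : Mat m))]
    have hones : ((S.sort (· ≤ ·)).map fun _ => (1 : Mat m)).prod = 1 :=
      List.prod_eq_one (fun x hx => by rcases List.mem_map.mp hx with ⟨y, -, rfl⟩; rfl)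
    rw [hones]
  -- Step 2: PhiStar as τ of the conjugated product
  have step2 : PhiStar U σ ((oprod f J)ᴴ * oprod f I)
      = PVaux.tauL σ ((oprod c J)ᴴ * oprod c I) := by
    have h0 : PhiStar U σ ((oprod f J)ᴴ * oprod f I)
        = PVaux.tauL σ (Uᴴ * (((oprod f J)ᴴ * oprod f I) ⊗ₖ (1 : Mat m)) * U) := by
      show ptrace2 _ = ptrace2 _
      congr 1
      simp [Matrix.mul_assoc]
    rw [h0]
    congr 1
    have e2 : ((oprod f J)ᴴ * oprod f I) ⊗ₖ (1 : Mat m)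
        = (oprod (aOp f) J)ᴴ * oprod (aOp f) I := by
      rw [opA J, opA I, PVaux.kron_conjTranspose, Matrix.conjTranspose_one,
        ← Matrix.mul_kronecker_mul, Matrix.one_mul]
    rw [e2]
    have e3 : ∀ S : Finset (Fin m),
        PVaux.conjU U hU1 hU2 (oprod (aOp f) S) = oprod c S := by
      intro S
      rw [oprod, map_list_prod, List.map_map]
      rfl
    calc Uᴴ * ((oprod (aOp f) J)ᴴ * oprod (aOp f) I) * U
        = PVaux.conjU U hU1 hU2 ((oprod (aOp f) J)ᴴ * oprod (aOp f) I) := rfl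
      _ = PVaux.conjU U hU1 hU2 ((oprod (aOp f) J)ᴴ) * PVaux.conjU U hU1 hU2 (oprod (aOp f) I) :=
          map_mul _ _ _
      _ = (oprod c J)ᴴ * oprod c I := by
          rw [PVaux.conjU_conjTranspose, e3, e3]
  rw [step2]
  -- Step 3: expansion of `oprod c S`
  have expand : ∀ (S : Finset (Fin m)),
      oprod c S = ∑ lam : Fin S.card → (Fin m ⊕ Fin m),
        (∏ r, Sum.elim (A (S.orderEmbOfFin rfl r)) (B (S.orderEmbOfFin rfl r)) (lam r)) •
          (List.ofFn (PVaux.dd f ∘ lam)).prod := by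
    intro S
    rw [oprod, PVaux.sort_map_eq_ofFn S rfl c]
    calc (List.ofFn fun r : Fin S.card => c (S.orderEmbOfFin rfl r)).prod
        = (List.ofFn fun r : Fin S.card => ∑ x : Fin m ⊕ Fin m,
            Sum.elim (A (S.orderEmbOfFin rfl r)) (B (S.orderEmbOfFin rfl r)) x
              • PVaux.dd f x).prod := by
          exact congrArg List.prod (congrArg List.ofFn (funext fun r => hc _))
      _ = ∑ lam : Fin S.card → (Fin m ⊕ Fin m), (List.ofFn fun r =>
            Sum.elim (A (S.orderEmbOfFin rfl r)) (B (S.orderEmbOfFin rfl r)) (lam r)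
              • PVaux.dd f (lam r)).prod := PVaux.prod_ofFn_sum _
      _ = ∑ lam : Fin S.card → (Fin m ⊕ Fin m),
            (∏ r, Sum.elim (A (S.orderEmbOfFin rfl r)) (B (S.orderEmbOfFin rfl r)) (lam r)) •
              (List.ofFn (PVaux.dd f ∘ lam)).prod :=
          Finset.sum_congr rfl fun lam _ => PVaux.prod_ofFn_smul _ _
  -- Step 4: expand the τ of the product into a double sum
  have step4 : PVaux.tauL σ ((oprod c J)ᴴ * oprod c I)
      = ∑ kap : Fin J.card → (Fin m ⊕ Fin m), ∑ lam : Fin I.card → (Fin m ⊕ Fin m),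
          (star (∏ r, Sum.elim (A (J.orderEmbOfFin rfl r)) (B (J.orderEmbOfFin rfl r)) (kap r))
            * (∏ r, Sum.elim (A (I.orderEmbOfFin rfl r)) (B (I.orderEmbOfFin rfl r)) (lam r))) •
            PVaux.tauL σ (((List.ofFn (PVaux.dd f ∘ kap)).prod)ᴴ
              * (List.ofFn (PVaux.dd f ∘ lam)).prod) := by
    rw [expand J, expand I, Matrix.conjTranspose_sum, Finset.sum_mul_sum]
    rw [map_sum]
    refine Finset.sum_congr rfl fun kap _ => ?_
    rw [map_sum]
    refine Finset.sum_congr rfl fun lam _ => ?_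
    rw [Matrix.conjTranspose_smul, smul_mul_smul_comm, LinearMap.map_smul]
  rw [step4]
  -- Step 5: kill the `b`-contributions
  have red1 : ∀ kap : Fin J.card → (Fin m ⊕ Fin m),
      (∑ lam : Fin I.card → (Fin m ⊕ Fin m),
          (star (∏ r, Sum.elim (A (J.orderEmbOfFin rfl r)) (B (J.orderEmbOfFin rfl r)) (kap r))
            * (∏ r, Sum.elim (A (I.orderEmbOfFin rfl r)) (B (I.orderEmbOfFin rfl r)) (lam r))) •
            PVaux.tauL σ (((List.ofFn (PVaux.dd f ∘ kap)).prod)ᴴ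
              * (List.ofFn (PVaux.dd f ∘ lam)).prod))
      = ∑ lam' : Fin I.card → Fin m,
          (star (∏ r, Sum.elim (A (J.orderEmbOfFin rfl r)) (B (J.orderEmbOfFin rfl r)) (kap r))
            * (∏ r, A (I.orderEmbOfFin rfl r) (lam' r))) •
            PVaux.tauL σ (((List.ofFn (PVaux.dd f ∘ kap)).prod)ᴴ
              * (List.ofFn (PVaux.dd f ∘ (Sum.inl ∘ lam'))).prod) := by
    intro kap
    rw [PVaux.sum_reduce _ (fun lam hlam => by
      rw [PVaux.tau_kill_right f σ hσvac kap lam hlam, smul_zero])]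
    refine Finset.sum_congr rfl fun lam' _ => ?_
    simp [Function.comp]
  simp only [red1]
  have red2 : (∑ kap : Fin J.card → (Fin m ⊕ Fin m), ∑ lam' : Fin I.card → Fin m,
          (star (∏ r, Sum.elim (A (J.orderEmbOfFin rfl r)) (B (J.orderEmbOfFin rfl r)) (kap r))
            * (∏ r, A (I.orderEmbOfFin rfl r) (lam' r))) •
            PVaux.tauL σ (((List.ofFn (PVaux.dd f ∘ kap)).prod)ᴴ
              * (List.ofFn (PVaux.dd f ∘ (Sum.inl ∘ lam'))).prod))
      = ∑ kap' : Fin J.card → Fin m, ∑ lam' : Fin I.card → Fin m,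
          (star (∏ r, A (J.orderEmbOfFin rfl r) (kap' r))
            * (∏ r, A (I.orderEmbOfFin rfl r) (lam' r))) •
            (((List.ofFn (f ∘ kap')).prod)ᴴ * (List.ofFn (f ∘ lam')).prod) := by
    rw [PVaux.sum_reduce _ (fun kap hkap => Finset.sum_eq_zero fun lam' _ => by
      rw [PVaux.tau_kill_left f σ hσherm hσvac kap lam' hkap, smul_zero])]
    refine Finset.sum_congr rfl fun kap' _ => Finset.sum_congr rfl fun lam' _ => ?_
    rw [PVaux.tau_collapse f σ hσtr kap' lam']
    simp [Function.comp]
  rw [red2]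
  -- Step 6: factor the double sum and apply the determinant expansion
  have factor : (∑ kap' : Fin J.card → Fin m, ∑ lam' : Fin I.card → Fin m,
          (star (∏ r, A (J.orderEmbOfFin rfl r) (kap' r))
            * (∏ r, A (I.orderEmbOfFin rfl r) (lam' r))) •
            (((List.ofFn (f ∘ kap')).prod)ᴴ * (List.ofFn (f ∘ lam')).prod))
      = (∑ kap' : Fin J.card → Fin m,
          (∏ r, A (J.orderEmbOfFin rfl r) (kap' r)) • (List.ofFn (f ∘ kap')).prod)ᴴ
        * (∑ lam' : Fin I.card → Fin m,
            (∏ r, A (I.orderEmbOfFin rfl r) (lam' r)) • (List.ofFn (f ∘ lam')).prod) := by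
    rw [Matrix.conjTranspose_sum, Finset.sum_mul_sum]
    refine Finset.sum_congr rfl fun kap' _ => Finset.sum_congr rfl fun lam' _ => ?_
    rw [Matrix.conjTranspose_smul, smul_mul_smul_comm]
  rw [factor, PVaux.detExpand f hf' A I, PVaux.detExpand f hf' A J]
  rw [Matrix.conjTranspose_sum, Finset.sum_mul_sum]
  refine Finset.sum_congr rfl fun K _ => Finset.sum_congr rfl fun L _ => ?_
  rw [Matrix.conjTranspose_smul, smul_mul_smul_comm]
  by_cases h : K.card = J.card ∧ L.card = I.card
  · rw [if_pos h, starRingEnd_apply]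
  · rw [if_neg h]
    rcases not_and_or.mp h with hK | hL
    · rw [show subDet A J K = 0 from dif_neg hK]
      simp
    · rw [show subDet A I L = 0 from dif_neg hL]
      simp


end
end

section
/- Let v ∈ ℂ^{2^m} be a normalized vacuum vector: f_j.mulVec v = 0 for all j ∈ Fin m and ⟨v, v⟩ = 1. For a finset M ⊆ Fin m define the Fock vector |M⟩ = f_M†.mulVec v. Then for all finsets Ξ, Ω, M ⊆ Fin m, ⟨|M⟩, (f_Ξ† f_Ω).mulVec |M⟩⟩ = (if Ξ = Ω ∧ Ξ ⊆ M then 1 else 0), where ⟨x, y⟩ = Σ_s conj(x_s) y_s. -/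
open Matrix Finset

noncomputable section

/-- The Fock vector `|M⟩ = f_M† |0⟩` built from a vacuum vector `v`. -/
def fockVec {m : ℕ} (f : Fin m → Mat m) (v : Fin (2^m) → ℂ) (M : Finset (Fin m)) :
    Fin (2^m) → ℂ :=
  ((oprod f M)ᴴ).mulVec v

namespace FockStateAux

variable {m : ℕ} (f : Fin m → Mat m) (v : Fin (2^m) → ℂ)

/-- Vector obtained by applying creation operators `(f i)ᴴ` along a list (head applied last). -/
def ketL (l : List (Fin m)) : Fin (2 ^ m) → ℂ :=
  ((l.map fun i => (f i)ᴴ).prod).mulVec v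

lemma ketL_nil : ketL f v [] = v := by
  simp [ketL]

lemma ketL_cons (a : Fin m) (t : List (Fin m)) :
    ketL f v (a :: t) = (f a)ᴴ *ᵥ ketL f v t := by
  simp [ketL, ← Matrix.mulVec_mulVec]

lemma conj_prod (l : List (Fin m)) :
    ((l.map fun i => (f i)ᴴ).prod)ᴴ = (l.reverse.map f).prod := by
  induction l with
  | nil => simp
  | cons a t ih => simp [Matrix.conjTranspose_mul, ih, List.prod_append]

variable (hffd : ∀ i j : Fin m, f i * (f j)ᴴ + (f j)ᴴ * f i = if i = j then 1 else 0)
variable (hvac : ∀ j : Fin m, (f j).mulVec v = 0)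

include hffd hvac in
lemma fket : ∀ (l : List (Fin m)), l.Nodup → ∀ j : Fin m,
    f j *ᵥ ketL f v l =
      if j ∈ l then ((-1 : ℂ) ^ l.idxOf j) • ketL f v (l.erase j) else 0 := by
  intro l
  induction l with
  | nil =>
    intro _ j
    simpa [ketL_nil] using hvac j
  | cons a t ih =>
    intro hnd j
    obtain ⟨hat, hndt⟩ := List.nodup_cons.mp hnd
    have hmul : f j * (f a)ᴴ = (if j = a then (1 : Mat m) else 0) - (f a)ᴴ * f j := by
      rw [eq_sub_iff_add_eq, hffd j a]
    have key : f j *ᵥ ketL f v (a :: t)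
        = (if j = a then (1 : ℂ) else 0) • ketL f v t - (f a)ᴴ *ᵥ (f j *ᵥ ketL f v t) := by
      rw [ketL_cons, Matrix.mulVec_mulVec, hmul, Matrix.sub_mulVec, ← Matrix.mulVec_mulVec]
      congr 1
      split
      · simp [Matrix.one_mulVec]
      · simp [Matrix.zero_mulVec]
    rw [key, ih hndt j]
    by_cases hja : j = a
    · subst hja
      simp [hat, List.erase_cons_head]
    · rw [if_neg hja]
      by_cases hjt : j ∈ t
      · have herase : (a :: t).erase j = a :: t.erase j :=
          List.erase_cons_tail (by simp [Ne.symm hja])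
        have hidx : (a :: t).idxOf j = t.idxOf j + 1 :=
          List.idxOf_cons_ne t (Ne.symm hja)
        rw [if_pos hjt, if_pos (by simp [hjt]), herase, hidx, Matrix.mulVec_smul,
          ketL_cons, pow_succ]
        rw [zero_smul, zero_sub, mul_neg_one, neg_smul]
      · rw [if_neg hjt, if_neg (by simp [hja, hjt])]
        simp

include hffd hvac in
lemma shape : ∀ (w l : List (Fin m)), l.Nodup →
    ∃ (c : ℂ) (l' : List (Fin m)), l'.Sublist l ∧ l'.Nodup ∧
      ((w.map f).prod) *ᵥ ketL f v l = c • ketL f v l' := by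
  intro w
  induction w with
  | nil =>
    intro l h
    exact ⟨1, l, List.Sublist.refl l, h, by simp [Matrix.one_mulVec]⟩
  | cons a t ih =>
    intro l hnd
    obtain ⟨c, l', hsub, hnd', heq⟩ := ih l hnd
    have step : ((((a :: t)).map f).prod) *ᵥ ketL f v l
        = c • (f a *ᵥ ketL f v l') := by
      rw [List.map_cons, List.prod_cons, ← Matrix.mulVec_mulVec, heq, Matrix.mulVec_smul]
    rw [fket f v hffd hvac l' hnd' a] at step
    by_cases ha : a ∈ l'
    · rw [if_pos ha] at step
      exact ⟨c * (-1) ^ (l'.idxOf a), l'.erase a,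
        (List.erase_sublist (a := a) (l := l')).trans hsub, hnd'.erase a,
        by rw [step, smul_smul]⟩
    · rw [if_neg ha] at step
      exact ⟨0, l, List.Sublist.refl l, hnd, by rw [step]; simp⟩

include hffd hvac in
lemma Lkill : ∀ (w l : List (Fin m)), l.Nodup → ∀ j, j ∈ w → j ∉ l →
    ((w.map f).prod) *ᵥ ketL f v l = 0 := by
  intro w
  induction w with
  | nil => intro l _ j hj; simp at hj
  | cons a t ih =>
    intro l hnd j hjw hjl
    rw [List.map_cons, List.prod_cons, ← Matrix.mulVec_mulVec]
    by_cases hjt : j ∈ t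
    · rw [ih l hnd j hjt hjl, Matrix.mulVec_zero]
    · have hja : j = a := by
        rcases List.mem_cons.mp hjw with h | h
        · exact h
        · exact absurd h hjt
      subst hja
      obtain ⟨c, l', hsub, hnd', heq⟩ := shape f v hffd hvac t l hnd
      have hjl' : j ∉ l' := fun h => hjl (hsub.subset h)
      rw [heq, Matrix.mulVec_smul, fket f v hffd hvac l' hnd' j, if_neg hjl']
      simp

/-- Erase all elements of `w` from `l` (rightmost element of `w` erased first). -/
def eraseList (w l : List (Fin m)) : List (Fin m) :=
  w.foldr (fun a acc => acc.erase a) l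

lemma eraseList_nil (l : List (Fin m)) : eraseList ([] : List (Fin m)) l = l := rfl

lemma eraseList_cons (a : Fin m) (t l : List (Fin m)) :
    eraseList (a :: t) l = (eraseList t l).erase a := rfl

lemma eraseList_sublist (w l : List (Fin m)) : (eraseList w l).Sublist l := by
  induction w with
  | nil => exact List.Sublist.refl l
  | cons a t ih => exact (List.erase_sublist (a := a) (l := eraseList t l)).trans ih

lemma eraseList_nodup (w l : List (Fin m)) (h : l.Nodup) : (eraseList w l).Nodup :=
  (eraseList_sublist w l).nodup h

lemma mem_eraseList (w l : List (Fin m)) (h : l.Nodup) (j : Fin m) :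
    j ∈ eraseList w l ↔ j ∈ l ∧ j ∉ w := by
  induction w with
  | nil => simp [eraseList_nil]
  | cons a t ih =>
    rw [eraseList_cons, (eraseList_nodup t l h).mem_erase_iff, ih]
    simp only [List.mem_cons]
    tauto

include hffd hvac in
lemma Lgood : ∀ (w l : List (Fin m)), w.Nodup → l.Nodup → (∀ j ∈ w, j ∈ l) →
    ∃ c : ℂ, (c = 1 ∨ c = -1) ∧
      ((w.map f).prod) *ᵥ ketL f v l = c • ketL f v (eraseList w l) := by
  intro w
  induction w with
  | nil =>
    intro l _ hnd _
    exact ⟨1, Or.inl rfl, by simp [eraseList_nil, Matrix.one_mulVec]⟩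
  | cons a t ih =>
    intro l hndw hnd hsub
    obtain ⟨hat, hndt⟩ := List.nodup_cons.mp hndw
    obtain ⟨c, hc, heq⟩ := ih l hndt hnd (fun j hj => hsub j (List.mem_cons_of_mem a hj))
    have hmema : a ∈ eraseList t l :=
      (mem_eraseList t l hnd a).mpr ⟨hsub a (List.mem_cons_self (a := a) (l := t)), hat⟩
    have step : (((a :: t)).map f).prod *ᵥ ketL f v l
        = (c * (-1) ^ ((eraseList t l).idxOf a)) • ketL f v (eraseList (a :: t) l) := by
      rw [List.map_cons, List.prod_cons, ← Matrix.mulVec_mulVec, heq, Matrix.mulVec_smul,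
        fket f v hffd hvac _ (eraseList_nodup t l hnd) a, if_pos hmema, smul_smul,
        eraseList_cons]
    refine ⟨c * (-1) ^ ((eraseList t l).idxOf a), ?_, step⟩
    rcases Nat.even_or_odd ((eraseList t l).idxOf a) with he | ho
    · rw [he.neg_one_pow, mul_one]; exact hc
    · rw [ho.neg_one_pow, mul_neg_one]
      rcases hc with h | h <;> rw [h] <;> simp

include hffd hvac in
lemma annih : ∀ (l : List (Fin m)), l.Nodup →
    ((l.reverse.map f).prod) *ᵥ ketL f v l = v := by
  intro l
  induction l with
  | nil => simp [ketL_nil, Matrix.one_mulVec]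
  | cons a t ih =>
    intro hnd
    obtain ⟨hat, hndt⟩ := List.nodup_cons.mp hnd
    rw [List.reverse_cons, List.map_append, List.prod_append, ← Matrix.mulVec_mulVec]
    have h1 : ((([a]).map f).prod) *ᵥ ketL f v (a :: t) = ketL f v t := by
      rw [List.map_singleton, List.prod_singleton,
        fket f v hffd hvac (a :: t) hnd a, if_pos (List.mem_cons_self (a := a) (l := t)),
        List.idxOf_cons_self, List.erase_cons_head, pow_zero, one_smul]
    rw [h1, ih hndt]

include hvac in
lemma vac_pair : ∀ (l : List (Fin m)), l ≠ [] → star v ⬝ᵥ ketL f v l = 0 := by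
  intro l hl
  cases l with
  | nil => exact absurd rfl hl
  | cons a t =>
    rw [ketL_cons, Matrix.dotProduct_mulVec]
    have : star v ᵥ* (f a)ᴴ = 0 := by
      rw [← Matrix.star_mulVec, hvac a, star_zero]
    rw [this, zero_dotProduct]

include hffd hvac in
lemma ortho (hnorm : star v ⬝ᵥ v = 1) :
    ∀ (l₁ l₂ : List (Fin m)), l₁.Nodup → l₂.Nodup →
      l₁.Pairwise (· ≥ ·) → l₂.Pairwise (· ≥ ·) →
      star (ketL f v l₁) ⬝ᵥ ketL f v l₂ = if l₁ = l₂ then 1 else 0 := by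
  haveI : IsAntisymm (Fin m) (· ≥ ·) := ⟨fun a b h1 h2 => le_antisymm h2 h1⟩
  intro l₁ l₂ hnd₁ hnd₂ hs₁ hs₂
  have base : star (ketL f v l₁) ⬝ᵥ ketL f v l₂
      = star v ⬝ᵥ ((l₁.reverse.map f).prod) *ᵥ ketL f v l₂ := by
    rw [show ketL f v l₁ = ((l₁.map fun i => (f i)ᴴ).prod) *ᵥ v from rfl,
      Matrix.star_mulVec, conj_prod, ← Matrix.dotProduct_mulVec]
  by_cases heq : l₁ = l₂
  · subst heq
    rw [if_pos rfl, base, annih f v hffd hvac l₁ hnd₁, hnorm]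
  · rw [if_neg heq, base]
    by_cases hsub : ∀ j ∈ l₁, j ∈ l₂
    · obtain ⟨c, _, h⟩ := Lgood f v hffd hvac l₁.reverse l₂ (List.nodup_reverse.mpr hnd₁) hnd₂
        (fun j hj => hsub j (List.mem_reverse.mp hj))
      have hne : eraseList l₁.reverse l₂ ≠ [] := by
        intro h0
        apply heq
        apply List.Perm.eq_of_pairwise' hs₁ hs₂
        rw [List.perm_ext_iff_of_nodup hnd₁ hnd₂]
        intro a
        constructor
        · exact hsub a
        · intro ha
          by_contra ha1
          have : a ∈ eraseList l₁.reverse l₂ :=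
            (mem_eraseList _ _ hnd₂ a).mpr ⟨ha, fun hr => ha1 (List.mem_reverse.mp hr)⟩
          rw [h0] at this
          exact absurd this (List.not_mem_nil (a := a))
      rw [h, dotProduct_smul, vac_pair f v hvac _ hne, smul_zero]
    · push_neg at hsub
      obtain ⟨j, hj₁, hj₂⟩ := hsub
      rw [Lkill f v hffd hvac l₁.reverse l₂ hnd₂ j (List.mem_reverse.mpr hj₁) hj₂,
        dotProduct_zero]

/-- Sorted-descending list of a finset. -/
def desc (M : Finset (Fin m)) : List (Fin m) := (M.sort (· ≤ ·)).reverse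

lemma desc_nodup (M : Finset (Fin m)) : (desc M).Nodup :=
  List.nodup_reverse.mpr (Finset.sort_nodup M _)

lemma desc_sorted (M : Finset (Fin m)) : (desc M).Pairwise (· ≥ ·) := by
  have := Finset.pairwise_sort M (· ≤ ·)
  rw [desc, List.pairwise_reverse]
  exact this

lemma mem_desc (M : Finset (Fin m)) (j : Fin m) : j ∈ desc M ↔ j ∈ M := by
  rw [desc, List.mem_reverse, Finset.mem_sort]

lemma desc_inj {A B : Finset (Fin m)} (h : desc A = desc B) : A = B := by
  ext j
  rw [← mem_desc, ← mem_desc, h]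

lemma fock_eq (M : Finset (Fin m)) : fockVec f v M = ketL f v (desc M) := by
  have : oprod f M = (((desc M).map fun i => (f i)ᴴ).prod)ᴴ := by
    rw [conj_prod, desc, List.reverse_reverse, oprod]
  rw [fockVec, this, Matrix.conjTranspose_conjTranspose, ketL]

include hffd hvac in
lemma fin_apply (Ω M : Finset (Fin m)) (h : Ω ⊆ M) :
    ∃ c : ℂ, (c = 1 ∨ c = -1) ∧
      oprod f Ω *ᵥ ketL f v (desc M) = c • ketL f v (desc (M \ Ω)) := by
  haveI : IsAntisymm (Fin m) (· ≥ ·) := ⟨fun a b h1 h2 => le_antisymm h2 h1⟩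
  obtain ⟨c, hc, heq⟩ := Lgood f v hffd hvac (Ω.sort (· ≤ ·)) (desc M)
    (Finset.sort_nodup Ω _) (desc_nodup M)
    (fun j hj => (mem_desc M j).mpr (h (Finset.mem_sort _ |>.mp hj)))
  have hEq : eraseList (Ω.sort (· ≤ ·)) (desc M) = desc (M \ Ω) := by
    refine (fun hp hs => List.Perm.eq_of_pairwise' hs (desc_sorted _) hp) ?_ ?_
    · rw [List.perm_ext_iff_of_nodup (eraseList_nodup _ _ (desc_nodup M)) (desc_nodup _)]
      intro a
      rw [mem_eraseList _ _ (desc_nodup M), mem_desc, mem_desc, Finset.mem_sdiff,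
        Finset.mem_sort]
    · exact List.Pairwise.sublist (eraseList_sublist _ _) (desc_sorted M)
  exact ⟨c, hc, by rw [oprod, heq, hEq]⟩

include hffd hvac in
lemma fin_kill (Ω M : Finset (Fin m)) (h : ¬ Ω ⊆ M) :
    oprod f Ω *ᵥ ketL f v (desc M) = 0 := by
  obtain ⟨j, hjΩ, hjM⟩ := Finset.not_subset.mp h
  exact Lkill f v hffd hvac (Ω.sort (· ≤ ·)) (desc M) (desc_nodup M) j
    ((Finset.mem_sort _).mpr hjΩ) (fun hh => hjM ((mem_desc M j).mp hh))

end FockStateAux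

open FockStateAux in
/-- Moments of normally ordered monomials in a Fock state:
`⟨M| f_Ξ† f_Ω |M⟩ = δ_{Ξ,Ω} 1_{Ξ ⊆ M}`. -/
theorem fock_state_moments {m : ℕ} (f : Fin m → Mat m)
    (hff : ∀ i j : Fin m, f i * f j + f j * f i = 0)
    (hffd : ∀ i j : Fin m, f i * (f j)ᴴ + (f j)ᴴ * f i = if i = j then 1 else 0)
    (v : Fin (2^m) → ℂ)
    (hvac : ∀ j : Fin m, (f j).mulVec v = 0)
    (hnorm : star v ⬝ᵥ v = 1)
    (Ξ Ω M : Finset (Fin m)) :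
    star (fockVec f v M) ⬝ᵥ (((oprod f Ξ)ᴴ * oprod f Ω).mulVec (fockVec f v M))
      = if Ξ = Ω ∧ Ξ ⊆ M then 1 else 0 := by
  rw [fock_eq f v M, ← Matrix.mulVec_mulVec]
  have hmove : star (ketL f v (desc M)) ⬝ᵥ ((oprod f Ξ)ᴴ *ᵥ (oprod f Ω *ᵥ ketL f v (desc M)))
      = star (oprod f Ξ *ᵥ ketL f v (desc M)) ⬝ᵥ (oprod f Ω *ᵥ ketL f v (desc M)) := by
    rw [Matrix.star_mulVec, ← Matrix.dotProduct_mulVec]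
  rw [hmove]
  by_cases hΞ : Ξ ⊆ M
  · by_cases hΩ : Ω ⊆ M
    · by_cases heq : Ξ = Ω
      · subst heq
        obtain ⟨c, hc, h⟩ := fin_apply f v hffd hvac Ξ M hΞ
        rw [h, star_smul, smul_dotProduct, dotProduct_smul,
          ortho f v hffd hvac hnorm _ _ (desc_nodup _) (desc_nodup _)
            (desc_sorted _) (desc_sorted _), if_pos rfl, if_pos ⟨rfl, hΞ⟩]
        rcases hc with h | h <;> subst h <;> simp
      · obtain ⟨c₁, _, h₁⟩ := fin_apply f v hffd hvac Ξ M hΞ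
        obtain ⟨c₂, _, h₂⟩ := fin_apply f v hffd hvac Ω M hΩ
        have hne : desc (M \ Ξ) ≠ desc (M \ Ω) := by
          intro h
          apply heq
          have := desc_inj h
          calc Ξ = M \ (M \ Ξ) := (Finset.sdiff_sdiff_eq_self hΞ).symm
            _ = M \ (M \ Ω) := by rw [this]
            _ = Ω := Finset.sdiff_sdiff_eq_self hΩ
        rw [h₁, h₂, star_smul, smul_dotProduct, dotProduct_smul,
          ortho f v hffd hvac hnorm _ _ (desc_nodup _) (desc_nodup _)
            (desc_sorted _) (desc_sorted _), if_neg hne,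
          if_neg (fun hh => heq hh.1)]
        simp
    · rw [fin_kill f v hffd hvac Ω M hΩ, dotProduct_zero,
        if_neg (fun hh : Ξ = Ω ∧ Ξ ⊆ M => hΩ (hh.1 ▸ hh.2))]
  · rw [fin_kill f v hffd hvac Ξ M hΞ, star_zero, zero_dotProduct,
      if_neg (fun hh => hΞ hh.2)]

end
end

section
/- Let σ ∈ M₂ᵐ commute with the number operator, σ N_f = N_f σ, where N_f = Σ_{j} (f_j)ᴴ f_j. Then for all finsets Ξ, Ω ⊆ Fin m with |Ξ| ≠ |Ω|, Tr(σ f_Ξ† f_Ω) = 0; in particular Tr(σ f_Ω) = 0 for every nonempty Ω. -/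
open Matrix Finset

noncomputable section

/-- The number operator `N_f = ∑_j f_jᴴ f_j`. -/
def numberOp {m : ℕ} (f : Fin m → Mat m) : Mat m := ∑ j, (f j)ᴴ * f j

lemma numberOp_conjTranspose {m : ℕ} (f : Fin m → Mat m) :
    (numberOp f)ᴴ = numberOp f := by
  simp [numberOp, conjTranspose_sum, conjTranspose_mul]

lemma numberOp_mul_f {m : ℕ} (f : Fin m → Mat m)
    (hff : ∀ i j : Fin m, f i * f j + f j * f i = 0)
    (hffd : ∀ i j : Fin m, f i * (f j)ᴴ + (f j)ᴴ * f i = if i = j then 1 else 0)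
    (i : Fin m) : numberOp f * f i = f i * numberOp f - f i := by
  have hA : ∀ j : Fin m, f j * f i = -(f i * f j) := fun j =>
    eq_neg_of_add_eq_zero_right (hff i j)
  have hB : ∀ j : Fin m, (f j)ᴴ * f i = (if i = j then 1 else 0) - f i * (f j)ᴴ := fun j =>
    eq_sub_of_add_eq' (hffd i j)
  have key : ∀ j : Fin m,
      (f j)ᴴ * f j * f i = f i * ((f j)ᴴ * f j) - (if i = j then 1 else 0) * f j := by
    intro j
    rw [mul_assoc, hA j, mul_neg, ← mul_assoc, hB j, sub_mul, neg_sub, mul_assoc]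
  calc numberOp f * f i = ∑ j, (f j)ᴴ * f j * f i := by rw [numberOp, Finset.sum_mul]
    _ = ∑ j, (f i * ((f j)ᴴ * f j) - (if i = j then 1 else 0) * f j) :=
        Finset.sum_congr rfl fun j _ => key j
    _ = f i * numberOp f - f i := by
        rw [Finset.sum_sub_distrib, ← Finset.mul_sum, ← numberOp]
        congr 1
        simp [ite_mul]

lemma numberOp_mul_prod {m : ℕ} (f : Fin m → Mat m)
    (hff : ∀ i j : Fin m, f i * f j + f j * f i = 0)
    (hffd : ∀ i j : Fin m, f i * (f j)ᴴ + (f j)ᴴ * f i = if i = j then 1 else 0)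
    (l : List (Fin m)) :
    numberOp f * (l.map f).prod
      = (l.map f).prod * numberOp f - (l.length : ℂ) • (l.map f).prod := by
  induction l with
  | nil => simp
  | cons a t ih =>
    simp only [List.map_cons, List.prod_cons, List.length_cons]
    rw [← mul_assoc, numberOp_mul_f f hff hffd, sub_mul, mul_assoc, ih]
    push_cast
    rw [mul_sub, mul_smul_comm, add_smul, one_smul, ← mul_assoc]
    abel

lemma numberOp_mul_oprod {m : ℕ} (f : Fin m → Mat m)
    (hff : ∀ i j : Fin m, f i * f j + f j * f i = 0)
    (hffd : ∀ i j : Fin m, f i * (f j)ᴴ + (f j)ᴴ * f i = if i = j then 1 else 0)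
    (I : Finset (Fin m)) :
    numberOp f * oprod f I = oprod f I * numberOp f - (I.card : ℂ) • oprod f I := by
  have := numberOp_mul_prod f hff hffd (I.sort (· ≤ ·))
  rwa [Finset.length_sort] at this

lemma numberOp_mul_oprod_adj {m : ℕ} (f : Fin m → Mat m)
    (hff : ∀ i j : Fin m, f i * f j + f j * f i = 0)
    (hffd : ∀ i j : Fin m, f i * (f j)ᴴ + (f j)ᴴ * f i = if i = j then 1 else 0)
    (I : Finset (Fin m)) :
    numberOp f * (oprod f I)ᴴ
      = (oprod f I)ᴴ * numberOp f + (I.card : ℂ) • (oprod f I)ᴴ := by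
  have h := congrArg conjTranspose (numberOp_mul_oprod f hff hffd I)
  simp only [conjTranspose_mul, conjTranspose_sub, conjTranspose_smul,
    numberOp_conjTranspose] at h
  simp only [star_natCast] at h
  -- h : (oprod f I)ᴴ * numberOp f = numberOp f * (oprod f I)ᴴ - card • (oprod f I)ᴴ
  rw [h]
  abel

/-- If `σ` commutes with the number operator, then `Tr(σ f_Ξ† f_Ω) = 0` whenever
`|Ξ| ≠ |Ω|`; in particular `Tr(σ f_Ω) = 0` for every nonempty `Ω`. -/
theorem gauge_invariant_moments_vanish {m : ℕ} (f : Fin m → Mat m)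
    (hff : ∀ i j : Fin m, f i * f j + f j * f i = 0)
    (hffd : ∀ i j : Fin m, f i * (f j)ᴴ + (f j)ᴴ * f i = if i = j then 1 else 0)
    (σ : Mat m) (hσgauge : σ * numberOp f = numberOp f * σ) :
    (∀ Ξ Ω : Finset (Fin m), Ξ.card ≠ Ω.card →
        Matrix.trace (σ * (oprod f Ξ)ᴴ * oprod f Ω) = 0) ∧
    (∀ Ω : Finset (Fin m), Ω.Nonempty → Matrix.trace (σ * oprod f Ω) = 0) := by
  have main : ∀ Ξ Ω : Finset (Fin m), Ξ.card ≠ Ω.card →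
      Matrix.trace (σ * (oprod f Ξ)ᴴ * oprod f Ω) = 0 := by
    intro Ξ Ω hne
    set N := numberOp f with hN
    set X := (oprod f Ξ)ᴴ with hX
    set Y := oprod f Ω with hY
    set T := σ * X * Y with hT
    have h1 : N * T = T * N + ((Ξ.card : ℂ) - (Ω.card : ℂ)) • T := by
      calc N * T = (N * σ) * X * Y := by rw [hT]; noncomm_ring
        _ = σ * (N * X) * Y := by rw [← hσgauge]; noncomm_ring
        _ = σ * (X * N + (Ξ.card : ℂ) • X) * Y := by
            rw [numberOp_mul_oprod_adj f hff hffd]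
        _ = σ * X * (N * Y) + (Ξ.card : ℂ) • T := by
            rw [hT]; simp only [mul_add, add_mul, smul_mul_assoc, mul_smul_comm]
            noncomm_ring
        _ = σ * X * (Y * N - (Ω.card : ℂ) • Y) + (Ξ.card : ℂ) • T := by
            rw [numberOp_mul_oprod f hff hffd]
        _ = T * N + ((Ξ.card : ℂ) - (Ω.card : ℂ)) • T := by
            rw [hT]; simp only [mul_sub, mul_smul_comm, sub_smul]
            noncomm_ring
    have h2 : Matrix.trace (N * T) = Matrix.trace (T * N) := Matrix.trace_mul_comm N T
    rw [h1, Matrix.trace_add, Matrix.trace_smul] at h2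
    have h3 := add_eq_left.mp h2
    rw [smul_eq_mul] at h3
    have hc : ((Ξ.card : ℂ) - (Ω.card : ℂ)) ≠ 0 := by
      intro h
      exact hne (Nat.cast_injective (sub_eq_zero.mp h))
    exact (mul_eq_zero.mp h3).resolve_left hc
  refine ⟨main, fun Ω hΩ => ?_⟩
  have h := main ∅ Ω (by simp [Finset.card_eq_zero.not.mpr (Finset.nonempty_iff_ne_empty.mp hΩ), Ne.symm, (Finset.card_pos.mpr hΩ).ne'])
  simpa [oprod] using h
end
end
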